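/- arXiv:2012.12150 — 8 statements merged into one kernel-verified Lean document; each statement's English description precedes it below -/
import Mathlib

section
/- Let (S, Σ) be a measurable space and let E be a finite-dimensional real normed vector space. Let f : S × E → E be a function such that for every fixed α ∈ S the map x ↦ f(α, x) is continuous, and for every fixed x ∈ E the map α ↦ f(α, x) is Σ-measurable. If for every α ∈ S the equation f(α, x) = 0 has a unique solution x = g(α), then the map g : S → E is Σ-measurable. -/
open MeasureTheory
open scoped ENNReal NNReal

/-- Measurable-selection lemma (Lemma 3.1): if `f : S × E → E` is continuous in the
second argument, measurable in the first, and for each `α` the equation `f α x = 0`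
has the unique solution `x = g α`, then `g` is measurable. -/
theorem stmt0 {S : Type*} [MeasurableSpace S]
    {E : Type*} [NormedAddCommGroup E] [NormedSpace ℝ E] [FiniteDimensional ℝ E]
    [MeasurableSpace E] [BorelSpace E]
    (f : S → E → E)
    (hcont : ∀ α : S, Continuous fun x : E => f α x)
    (hmeas : ∀ x : E, Measurable fun α : S => f α x)
    (g : S → E)
    (hsol : ∀ α : S, f α (g α) = 0)
    (huniq : ∀ α : S, ∀ x : E, f α x = 0 → x = g α) :
    Measurable g := by
  apply measurable_of_isClosed
  intro C hC
  -- decompose C into compact pieces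
  set K : ℕ → Set E := fun n => C ∩ Metric.closedBall 0 n with hK
  have hKcomp : ∀ n, IsCompact (K n) := fun n =>
    (isCompact_closedBall (0 : E) n).inter_left hC
  -- countable dense subsets of each piece
  have hD : ∀ n, ∃ t : Set E, t ⊆ K n ∧ t.Countable ∧ K n ⊆ closure t := fun n =>
    EMetric.subset_countable_closure_of_compact (hKcomp n)
  choose D hDsub hDcount hDdense using hD
  -- the key description of the preimage
  have key : g ⁻¹' C = ⋃ n : ℕ, {α | (⨅ d : D n, (‖f α d‖₊ : ℝ≥0∞)) = 0} := by
    ext α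
    simp only [Set.mem_preimage, Set.mem_iUnion, Set.mem_setOf_eq]
    constructor
    · intro hgC
      obtain ⟨n, hn⟩ := exists_nat_ge ‖g α‖
      refine ⟨n, ?_⟩
      have hgK : g α ∈ K n := ⟨hgC, by simpa [Metric.mem_closedBall, dist_zero_right] using hn⟩
      have hgcl : g α ∈ closure (D n) := hDdense n hgK
      obtain ⟨u, hu_mem, hu_tendsto⟩ := mem_closure_iff_seq_limit.mp hgcl
      have htend : Filter.Tendsto (fun k => (‖f α (u k)‖₊ : ℝ≥0∞)) Filter.atTop (nhds 0) := by
        have h1 : Filter.Tendsto (fun k => f α (u k)) Filter.atTop (nhds 0) := by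
          have := ((hcont α).tendsto (g α)).comp hu_tendsto
          simpa [hsol α, Function.comp_def] using this
        have h2 : Filter.Tendsto (fun k => ‖f α (u k)‖₊) Filter.atTop (nhds 0) := by
          simpa [Function.comp_def] using (continuous_nnnorm.tendsto (0 : E)).comp h1
        exact (ENNReal.tendsto_coe.mpr h2).congr' (by simp) |>.mono_right (by simp)
      refine le_antisymm ?_ (zero_le)
      refine ge_of_tendsto' htend fun k => ?_
      exact iInf_le _ (⟨u k, hu_mem k⟩ : D n)
    · rintro ⟨n, hn⟩
      -- D n is nonempty, otherwise the infimum is ⊤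
      have hne : (D n).Nonempty := by
        by_contra h
        rw [Set.not_nonempty_iff_eq_empty] at h
        rw [h] at hn
        simp [iInf_of_empty] at hn
      have hKne : (K n).Nonempty := hne.mono (hDsub n)
      obtain ⟨x₀, hx₀K, hx₀min⟩ := (hKcomp n).exists_isMinOn hKne
        ((hcont α).norm.continuousOn)
      have hx₀le : (‖f α x₀‖₊ : ℝ≥0∞) = 0 := by
        refine le_antisymm ?_ (zero_le)
        rw [← hn]
        refine le_iInf fun d => ?_
        have := hx₀min (hDsub n d.2)
        simp only [Set.mem_setOf_eq] at this
        exact_mod_cast ENNReal.coe_le_coe.mpr (by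
          simpa [← NNReal.coe_le_coe] using this)
      have : f α x₀ = 0 := by
        simpa using hx₀le
      have := huniq α x₀ this
      exact this ▸ hx₀K.1
  rw [key]
  refine MeasurableSet.iUnion fun n => ?_
  have : Countable (D n) := (hDcount n).to_subtype
  have hm : Measurable fun α => ⨅ d : D n, (‖f α d‖₊ : ℝ≥0∞) :=
    Measurable.iInf fun d => (measurable_coe_nnreal_ennreal.comp (hmeas d).nnnorm)
  exact hm (measurableSet_singleton 0)
end

section
/- For every u⁰ ∈ E, every b ∈ E*, and every τ > 0 satisfying τ·λ_A ≤ 1 and τ·λ_B < 1, there exists a unique u ∈ E such that (u − u⁰, v)_H + τ⟨A u, v⟩ = τ⟨b, v⟩ for all v ∈ E. -/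
/-!
The residual `u ↦ u - u⁰ + τ J⁻¹(A u - b)` of the step (`J` the Riesz map) is continuous and,
by monotonicity and `τ λ_B < 1`, strongly monotone with constant `1 - τ λ_B / 2 > 0`; its zeros
are the solutions. Strong monotonicity gives injectivity. Surjectivity replaces Brouwer's theorem
by an induction on the dimension: for a unit vector `e` and `K = e⊥`, each slice problem
`P_K F (k + s e) = P_K y` on `K` has a solution `k s`, continuous in `s` because the slices are
uniformly strongly monotone; then `s ↦ ⟪F (k s + s e), e⟫` is strongly monotone on `ℝ`, so the
intermediate value theorem supplies the last coordinate.
-/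

open scoped RealInnerProductSpace
open Function Filter

universe u

variable {E : Type u} [NormedAddCommGroup E] [InnerProductSpace ℝ E]

def StrongMonotone (c : ℝ) (F : E → E) : Prop :=
  ∀ u w, c * ‖u - w‖ ^ 2 ≤ ⟪F u - F w, u - w⟫

variable {c : ℝ} {F : E → E}

namespace StrongMonotone

theorem mul_norm_sub_le (hF : StrongMonotone c F) (u w : E) :
    c * ‖u - w‖ ≤ ‖F u - F w‖ := by
  rcases (norm_nonneg (u - w)).eq_or_lt with h | h
  · rw [← h, mul_zero]
    exact norm_nonneg _
  · refine le_of_mul_le_mul_right ?_ h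
    calc c * ‖u - w‖ * ‖u - w‖ = c * ‖u - w‖ ^ 2 := by ring
      _ ≤ ⟪F u - F w, u - w⟫ := hF u w
      _ ≤ ‖F u - F w‖ * ‖u - w‖ := real_inner_le_norm _ _

theorem injective (hF : StrongMonotone c F) (hc : 0 < c) : Injective F := by
  intro u w h
  have hle := hF.mul_norm_sub_le u w
  rw [h, sub_self, norm_zero] at hle
  have hnorm : ‖u - w‖ = 0 := le_antisymm (nonpos_of_mul_nonpos_right hle hc) (norm_nonneg _)
  rwa [norm_sub_eq_zero_iff] at hnorm

theorem orthogonalProjectionOnto_comp (hF : StrongMonotone c F) (K : Submodule ℝ E)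
    [K.HasOrthogonalProjection] (x : E) :
    StrongMonotone c fun k : K => K.orthogonalProjectionOnto (F (k + x)) := by
  intro a b
  have := hF (a + x) (b + x)
  rw [add_sub_add_right_eq_sub] at this
  simpa [← map_sub] using this

end StrongMonotone

theorem continuous_of_forall_apply_eq_of_strongMonotone {X : Type*} [TopologicalSpace X]
    {G : X → E → E} (hG : ∀ u, Continuous fun x => G x u) (hmono : ∀ x, StrongMonotone c (G x))
    (hc : 0 < c) {k : X → E} {y : E} (hk : ∀ x, G x (k x) = y) : Continuous k := by
  rw [continuous_iff_continuousAt]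
  intro t
  rw [ContinuousAt, tendsto_iff_norm_sub_tendsto_zero]
  have hbound : ∀ s, ‖k s - k t‖ ≤ c⁻¹ * ‖G s (k t) - G t (k t)‖ := by
    intro s
    rw [le_inv_mul_iff₀ hc, norm_sub_rev (G s _), hk t, ← hk s]
    exact (hmono s).mul_norm_sub_le _ _
  have hlim := tendsto_iff_norm_sub_tendsto_zero.mp ((hG (k t)).tendsto t)
  refine squeeze_zero (fun s => norm_nonneg _) hbound ?_
  simpa using hlim.const_mul c⁻¹

theorem StrongMonotone.surjective_real {φ : ℝ → ℝ} (hφ : StrongMonotone c φ) (hc : 0 < c)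
    (hφc : Continuous φ) : Surjective φ := by
  have hlin : ∀ s t, t ≤ s → φ t + c * (s - t) ≤ φ s := by
    intro s t hts
    rcases hts.eq_or_lt with rfl | hlt
    · simp
    have h := hφ s t
    simp only [Real.norm_eq_abs, sq_abs, RCLike.inner_apply, conj_trivial] at h
    nlinarith [sub_pos.mpr hlt]
  refine hφc.surjective ?_ ?_
  · refine tendsto_atTop_mono' atTop ?_
      (tendsto_atTop_add_const_left _ (φ 0) (tendsto_id.const_mul_atTop hc))
    filter_upwards [eventually_ge_atTop 0] with s hs
    simpa using hlin s 0 hs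
  · refine tendsto_atBot_mono' atBot ?_
      (tendsto_atBot_add_const_left _ (φ 0) (tendsto_id.const_mul_atBot hc))
    filter_upwards [eventually_le_atBot 0] with s hs
    have := hlin 0 s hs
    simp only [id]
    linarith

theorem StrongMonotone.inner_comp_add_smul (hF : StrongMonotone c F) (hc : 0 ≤ c) {e : E}
    (he : ‖e‖ = 1) {k : ℝ → (ℝ ∙ e)ᗮ} {y : (ℝ ∙ e)ᗮ}
    (hk : ∀ s, (ℝ ∙ e)ᗮ.orthogonalProjectionOnto (F (k s + s • e)) = y) :
    StrongMonotone c fun s : ℝ => ⟪F (k s + s • e), e⟫ := by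
  intro s t
  set us := (k s : E) + s • e
  set ut := (k t : E) + t • e
  have hsub : us - ut = ((k s - k t : (ℝ ∙ e)ᗮ) : E) + (s - t) • e := by
    simp only [us, ut, Submodule.coe_sub, sub_smul]
    abel
  have hke : ⟪((k s - k t : (ℝ ∙ e)ᗮ) : E), e⟫ = 0 :=
    Submodule.mem_orthogonal_singleton_iff_inner_left.mp (k s - k t).2
  have hslice : ⟪F us - F ut, ((k s - k t : (ℝ ∙ e)ᗮ) : E)⟫ = 0 := by
    rw [← Submodule.inner_orthogonalProjectionOnto_eq_of_mem_right, map_sub, hk, hk, sub_self,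
      inner_zero_left]
  have hinner : ⟪F us - F ut, us - ut⟫ = (s - t) * (⟪F us, e⟫ - ⟪F ut, e⟫) := by
    rw [hsub, inner_add_right, hslice, zero_add, real_inner_smul_right, inner_sub_left]
  have hpyth : ‖us - ut‖ ^ 2 = ‖((k s - k t : (ℝ ∙ e)ᗮ) : E)‖ ^ 2 + (s - t) ^ 2 := by
    rw [hsub, sq, sq, norm_add_sq_eq_norm_sq_add_norm_sq_real (by rw [real_inner_smul_right, hke,
      mul_zero]), norm_smul, he, Real.norm_eq_abs]
    nlinarith [sq_abs (s - t)]
  simp only [Real.norm_eq_abs, sq_abs, RCLike.inner_apply, conj_trivial]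
  have := hF us ut
  nlinarith [sq_nonneg ‖((k s - k t : (ℝ ∙ e)ᗮ) : E)‖]

theorem StrongMonotone.surjective_of_surjective_orthogonal (hF : StrongMonotone c F) (hc : 0 < c)
    (hFc : Continuous F) {e : E} (he : ‖e‖ = 1)
    (hK : ∀ G : (ℝ ∙ e)ᗮ → (ℝ ∙ e)ᗮ, StrongMonotone c G → Continuous G → Surjective G) :
    Surjective F := by
  set K := (ℝ ∙ e)ᗮ
  set P := K.orthogonalProjectionOnto
  intro y
  have hslice : ∀ s : ℝ, ∃ k : K, P (F (k + s • e)) = P y := fun s =>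
    hK _ (hF.orthogonalProjectionOnto_comp K (s • e)) (by fun_prop) (P y)
  choose k hk using hslice
  have hkc : Continuous k :=
    continuous_of_forall_apply_eq_of_strongMonotone (G := fun s k => P (F (k + s • e)))
      (fun _ => by fun_prop) (fun s => hF.orthogonalProjectionOnto_comp K (s • e)) hc hk
  obtain ⟨s, hs⟩ := (hF.inner_comp_add_smul hc.le he hk).surjective_real hc (by fun_prop) ⟪y, e⟫
  refine ⟨k s + s • e, sub_eq_zero.mp ?_⟩
  have hmem : F (k s + s • e) - y ∈ K := by
    rw [Submodule.mem_orthogonal_singleton_iff_inner_left, inner_sub_left, sub_eq_zero]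
    exact hs
  have hP : P (F (k s + s • e) - y) = 0 := by rw [map_sub, hk s, sub_self]
  exact congrArg Subtype.val
    ((K.orthogonalProjectionOnto_mem_subspace_eq_self ⟨_, hmem⟩).symm.trans hP)

theorem StrongMonotone.surjective [FiniteDimensional ℝ E] (hF : StrongMonotone c F) (hc : 0 < c)
    (hFc : Continuous F) : Surjective F := by
  suffices ∀ (n : ℕ) (E : Type u) [NormedAddCommGroup E] [InnerProductSpace ℝ E]
      [FiniteDimensional ℝ E], Module.finrank ℝ E = n →
      ∀ F : E → E, StrongMonotone c F → Continuous F → Surjective F from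
    this _ E rfl F hF hFc
  intro n
  induction n with
  | zero =>
    intro E _ _ _ hE F _ _ y
    have : Subsingleton E := Module.finrank_zero_iff.mp hE
    exact ⟨y, Subsingleton.elim _ _⟩
  | succ n ih =>
    intro E _ _ _ hE F hF hFc
    have : Fact (Module.finrank ℝ E = n + 1) := ⟨hE⟩
    have : Nontrivial E := (Module.finrank_pos_iff (R := ℝ)).mp (by omega)
    obtain ⟨e, he⟩ := exists_norm_eq E zero_le_one
    have he0 : e ≠ 0 := norm_ne_zero_iff.mp (by rw [he]; exact one_ne_zero)
    exact hF.surjective_of_surjective_orthogonal hc hFc he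
      (ih _ (Submodule.finrank_orthogonal_span_singleton he0))

theorem StrongMonotone.bijective [FiniteDimensional ℝ E] (hF : StrongMonotone c F) (hc : 0 < c)
    (hFc : Continuous F) : Bijective F :=
  ⟨hF.injective hc, hF.surjective hc hFc⟩

section EulerStep

variable [CompleteSpace E]

noncomputable def eulerResidual (A : E → E →L[ℝ] ℝ) (u0 : E) (b : E →L[ℝ] ℝ) (τ : ℝ) (u : E) : E :=
  u - u0 + τ • (InnerProductSpace.toDual ℝ E).symm (A u - b)

variable {A : E → E →L[ℝ] ℝ} {u0 : E} {b : E →L[ℝ] ℝ} {τ : ℝ}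

theorem inner_eulerResidual (u v : E) :
    ⟪eulerResidual A u0 b τ u, v⟫ = ⟪u - u0, v⟫ + τ * (A u v - b v) := by
  rw [eulerResidual, inner_add_left, real_inner_smul_left, InnerProductSpace.toDual_symm_apply]
  rfl

theorem eulerResidual_eq_zero_iff (u : E) :
    eulerResidual A u0 b τ u = 0 ↔ ∀ v, ⟪u - u0, v⟫ + τ * A u v = τ * b v := by
  refine ⟨fun h v => ?_, fun h => ext_inner_right ℝ fun v => ?_⟩
  · have := inner_eulerResidual (A := A) (u0 := u0) (b := b) (τ := τ) u v
    rw [h, inner_zero_left] at this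
    linarith
  · rw [inner_eulerResidual, inner_zero_left]
    linarith [h v]

theorem continuous_eulerResidual (hA : Continuous A) : Continuous (eulerResidual A u0 b τ) := by
  unfold eulerResidual
  fun_prop

theorem strongMonotone_eulerResidual {lB : ℝ}
    (hmono : ∀ v w : E, 0 ≤ 2 * (A v (v - w) - A w (v - w)) + lB * ‖v - w‖ ^ 2) (hτ : 0 ≤ τ) :
    StrongMonotone (1 - τ * lB / 2) (eulerResidual A u0 b τ) := by
  intro u w
  have h : ⟪eulerResidual A u0 b τ u - eulerResidual A u0 b τ w, u - w⟫
      = ‖u - w‖ ^ 2 + τ * (A u (u - w) - A w (u - w)) := by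
    have hd : ⟪u - u0, u - w⟫ - ⟪w - u0, u - w⟫ = ‖u - w‖ ^ 2 := by
      rw [← inner_sub_left, sub_sub_sub_cancel_right, real_inner_self_eq_norm_sq]
    rw [inner_sub_left, inner_eulerResidual, inner_eulerResidual, ← hd]
    ring
  rw [h]
  nlinarith [mul_nonneg hτ (hmono u w)]

end EulerStep

theorem stmt1_general {E : Type*} [NormedAddCommGroup E] [InnerProductSpace ℝ E]
    [FiniteDimensional ℝ E]
    (A : E → E →L[ℝ] ℝ) (hA : Continuous A)
    (lB : ℝ)
    (hmono : ∀ v w : E, 0 ≤ 2 * (A v (v - w) - A w (v - w)) + lB * ‖v - w‖ ^ 2)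
    (u0 : E) (b : E →L[ℝ] ℝ) (τ : ℝ) (hτ : 0 < τ)
    (hτB : τ * lB < 1) :
    ∃! u : E, ∀ v : E, (inner ℝ (u - u0) v : ℝ) + τ * A u v = τ * b v := by
  have hc : 0 < 1 - τ * lB / 2 := by linarith
  have hres := strongMonotone_eulerResidual (u0 := u0) (b := b) hmono hτ.le
  simpa only [eulerResidual_eq_zero_iff] using
    (hres.bijective hc (continuous_eulerResidual hA)).existsUnique 0

/-- Lemma 3.2 (per sample path): unique solvability of one implicit Euler step
of the fully discrete scheme. `E` is a finite-dimensional inner product space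
(norm `‖·‖` is the `H`-norm), `nV` is a second norm on `E`, `A : E → E*` is
continuous, monotone (with constant `lB`) and coercive (with constants `μ, lam, lA`).
Then for every `u⁰`, every `b ∈ E*` and every time step `τ > 0` with
`τ·lA ≤ 1` and `τ·lB < 1` there is a unique `u` with
`(u − u⁰, v)_H + τ⟨Au, v⟩ = τ⟨b, v⟩` for all `v`. -/
theorem stmt1 {E : Type*} [NormedAddCommGroup E] [InnerProductSpace ℝ E]
    [FiniteDimensional ℝ E]
    (nV : E → ℝ)
    (hnV_eq : ∀ v : E, nV v = 0 ↔ v = 0)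
    (hnV_smul : ∀ (c : ℝ) (v : E), nV (c • v) = |c| * nV v)
    (hnV_add : ∀ v w : E, nV (v + w) ≤ nV v + nV w)
    (A : E → E →L[ℝ] ℝ) (hA : Continuous A)
    (p μ lam lA lB : ℝ) (hp : 1 < p) (hμ : 0 < μ) (hlam : 0 ≤ lam)
    (hlA : 0 ≤ lA) (hlB : 0 ≤ lB)
    (hmono : ∀ v w : E, 0 ≤ 2 * (A v (v - w) - A w (v - w)) + lB * ‖v - w‖ ^ 2)
    (hcoer : ∀ v : E, μ * nV v ^ p - lam ≤ A v v + lA * ‖v‖ ^ 2)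
    (u0 : E) (b : E →L[ℝ] ℝ) (τ : ℝ) (hτ : 0 < τ)
    (hτA : τ * lA ≤ 1) (hτB : τ * lB < 1) :
    ∃! u : E, ∀ v : E, (inner ℝ (u - u0) v : ℝ) + τ * A u v = τ * b v :=
  stmt1_general A hA lB hmono u0 b τ hτ hτB
end

section
/- Let T > 0 and let a, b : [0,T] → ℝ be integrable functions such that a(t) ≤ a(0) + ∫₀ᵗ b(s) ds for all t ∈ [0,T]. Then for every λ ≥ 0 and every t ∈ [0,T] it holds that e^{−λ t} a(t) + λ ∫₀ᵗ e^{−λ s} a(s) ds ≤ a(0) + ∫₀ᵗ e^{−λ s} b(s) ds. -/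
open MeasureTheory

open Set

lemma expInt (lam u v : ℝ) :
    ∫ s in u..v, lam * Real.exp (-lam * s) = Real.exp (-lam * u) - Real.exp (-lam * v) := by
  have h : ∀ s ∈ Set.uIcc u v, HasDerivAt (fun x => -Real.exp (-lam * x))
      (lam * Real.exp (-lam * s)) s := by
    intro s _
    have h1 : HasDerivAt (fun x : ℝ => -lam * x) (-lam) s := by
      simpa using (hasDerivAt_id s).const_mul (-lam)
    have h2 := (Real.hasDerivAt_exp (-lam * s)).comp s h1
    have h3 := h2.neg
    exact h3.congr_deriv (by ring)
  rw [intervalIntegral.integral_eq_sub_of_hasDerivAt h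
    ((continuous_const.mul (Real.continuous_exp.comp (continuous_const.mul continuous_id))).intervalIntegrable u v)]
  ring

lemma keyMeas (b : ℝ → ℝ) (hbm : Measurable b) (t : ℝ) (ht : 0 ≤ t)
    (hb : IntegrableOn b (Set.Ioc 0 t)) (lam : ℝ) (hlam : 0 ≤ lam) :
    ∫ s in Set.Ioc (0:ℝ) t, (lam * Real.exp (-lam * s)) * ∫ u in Set.Ioc (0:ℝ) s, b u
      = ∫ u in Set.Ioc (0:ℝ) t, (Real.exp (-lam * u) - Real.exp (-lam * t)) * b u := by
  set μ := volume.restrict (Set.Ioc (0:ℝ) t) with hμ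
  set F : ℝ × ℝ → ℝ := fun p => (lam * Real.exp (-lam * p.1)) * (Set.Ioc 0 p.1).indicator b p.2
    with hF
  have hμfin : IsFiniteMeasure μ := by
    constructor
    rw [hμ, Measure.restrict_apply_univ]
    exact (measure_Ioc_lt_top)
  -- measurability of F
  have hS : MeasurableSet {p : ℝ × ℝ | 0 < p.2 ∧ p.2 ≤ p.1} :=
    (measurableSet_lt measurable_const measurable_snd).inter
      (measurableSet_le measurable_snd measurable_fst)
  have hFeq : F = Set.indicator {p : ℝ × ℝ | 0 < p.2 ∧ p.2 ≤ p.1}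
      (fun p => (lam * Real.exp (-lam * p.1)) * b p.2) := by
    ext p
    by_cases h : 0 < p.2 ∧ p.2 ≤ p.1 <;>
      simp [hF, Set.indicator, Set.mem_Ioc, h]
  have hFmeas : Measurable F := by
    rw [hFeq]
    exact Measurable.indicator
      ((measurable_const.mul
        (Real.measurable_exp.comp (measurable_fst.const_mul (-lam)))).mul
        (hbm.comp measurable_snd)) hS
  -- integrability of F on μ.prod μ
  have hdom : Integrable (fun p : ℝ × ℝ => lam * |b p.2|) (μ.prod μ) := by
    haveI := hμfin
    refine (integrable_prod_iff' ?_).2 ⟨?_, ?_⟩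
    · exact (((hbm.abs.const_mul lam).comp measurable_snd).stronglyMeasurable).aestronglyMeasurable
    · exact Filter.Eventually.of_forall fun y => integrable_const (lam * |b y|)
    · have : (fun y => ∫ _ : ℝ, ‖lam * |b y|‖ ∂μ) =
          fun y => (μ Set.univ).toReal * (|lam| * |b y|) := by
        ext y
        simp [integral_const, abs_mul, smul_eq_mul, abs_abs, Measure.real_def]
      rw [this]
      simp_rw [← mul_assoc]
      exact (hb.abs.const_mul _)
  have hFint : Integrable F (μ.prod μ) := by
    refine Integrable.mono' hdom hFmeas.aestronglyMeasurable ?_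
    have hmem : ∀ᵐ p ∂(μ.prod μ), p ∈ Set.Ioc (0:ℝ) t ×ˢ Set.Ioc (0:ℝ) t := by
      rw [hμ, Measure.prod_restrict]
      exact ae_restrict_mem (measurableSet_Ioc.prod measurableSet_Ioc)
    filter_upwards [hmem] with p hp
    have h1 : Real.exp (-lam * p.1) ≤ 1 := by
      apply Real.exp_le_one_iff.2
      have := hp.1.1
      nlinarith
    have h2 : |(Set.Ioc 0 p.1).indicator b p.2| ≤ |b p.2| := by
      by_cases h : p.2 ∈ Set.Ioc 0 p.1 <;> simp [Set.indicator, h, abs_nonneg]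
    calc ‖F p‖ = (lam * Real.exp (-lam * p.1)) * |(Set.Ioc 0 p.1).indicator b p.2| := by
          rw [hF]
          simp [abs_mul, abs_of_nonneg hlam, abs_of_nonneg (Real.exp_pos _).le, Real.norm_eq_abs]
      _ ≤ (lam * 1) * |b p.2| := by
          apply mul_le_mul (by nlinarith [(Real.exp_pos (-lam * p.1)).le]) h2 (abs_nonneg _)
            (by nlinarith [(Real.exp_pos (-lam * p.1)).le])
      _ = lam * |b p.2| := by ring
  -- LHS equals iterated integral of F
  have hLHS : ∫ s, (lam * Real.exp (-lam * s)) * (∫ u in Set.Ioc (0:ℝ) s, b u) ∂μ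
      = ∫ s, ∫ u, F (s, u) ∂μ ∂μ := by
    rw [hμ]
    refine setIntegral_congr_fun measurableSet_Ioc fun s hs => ?_
    have : ∫ u, F (s, u) ∂μ
        = (lam * Real.exp (-lam * s)) * ∫ u, (Set.Ioc 0 s).indicator b u ∂μ := by
      simp only [hF]
      rw [integral_const_mul]
    rw [this, hμ, setIntegral_indicator measurableSet_Ioc]
    congr 2
    rw [Set.Ioc_inter_Ioc]
    simp [hs.2]
  -- Fubini
  have hswap : ∫ s, ∫ u, F (s, u) ∂μ ∂μ = ∫ u, ∫ s, F (s, u) ∂μ ∂μ :=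
    integral_integral_swap hFint
  rw [hLHS, hswap]
  refine setIntegral_congr_fun measurableSet_Ioc fun u hu => ?_
  have hFu : ∀ s, F (s, u) = (Set.Ici u).indicator
      (fun s => (lam * Real.exp (-lam * s)) * b u) s := by
    intro s
    have hu1 := hu.1
    by_cases h : u ≤ s
    · simp only [hF, Set.indicator, Set.mem_Ioc, Set.mem_Ici]
      rw [if_pos ⟨hu1, h⟩, if_pos h]
    · simp only [hF, Set.indicator, Set.mem_Ioc, Set.mem_Ici]
      rw [if_neg (fun hc => h hc.2), if_neg h, mul_zero]
  calc ∫ s, F (s, u) ∂μ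
      = ∫ s, (Set.Ici u).indicator (fun s => (lam * Real.exp (-lam * s)) * b u) s ∂μ := by
        refine integral_congr_ae (Filter.Eventually.of_forall fun s => hFu s)
    _ = ∫ s in Set.Ioc 0 t ∩ Set.Ici u, (lam * Real.exp (-lam * s)) * b u := by
        rw [hμ, setIntegral_indicator measurableSet_Ici]
    _ = ∫ s in Set.Icc u t, (lam * Real.exp (-lam * s)) * b u := by
        have hset : Set.Ioc 0 t ∩ Set.Ici u = Set.Icc u t := by
          ext s
          simp only [Set.mem_inter_iff, Set.mem_Ioc, Set.mem_Ici, Set.mem_Icc]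
          constructor
          · rintro ⟨⟨_, h2⟩, h3⟩; exact ⟨h3, h2⟩
          · rintro ⟨h1, h2⟩; exact ⟨⟨lt_of_lt_of_le hu.1 h1, h2⟩, h1⟩
        rw [hset]
    _ = (∫ s in Set.Icc u t, lam * Real.exp (-lam * s)) * b u := by
        rw [integral_mul_const]
    _ = (Real.exp (-lam * u) - Real.exp (-lam * t)) * b u := by
        rw [integral_Icc_eq_integral_Ioc, ← intervalIntegral.integral_of_le hu.2, expInt]

lemma keyGen (b : ℝ → ℝ) (t : ℝ) (ht : 0 ≤ t)
    (hb : IntegrableOn b (Set.Ioc 0 t)) (lam : ℝ) (hlam : 0 ≤ lam) :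
    ∫ s in Set.Ioc (0:ℝ) t, (lam * Real.exp (-lam * s)) * ∫ u in Set.Ioc (0:ℝ) s, b u
      = ∫ u in Set.Ioc (0:ℝ) t, (Real.exp (-lam * u) - Real.exp (-lam * t)) * b u := by
  set b' := (hb.1).mk b with hb'def
  have hb'm : Measurable b' := (hb.1).stronglyMeasurable_mk.measurable
  have hae : b =ᵐ[volume.restrict (Set.Ioc 0 t)] b' := (hb.1).ae_eq_mk
  have hb' : IntegrableOn b' (Set.Ioc 0 t) := hb.congr_fun_ae hae
  have hsub : ∀ s, s ≤ t → (∫ u in Set.Ioc (0:ℝ) s, b u) = ∫ u in Set.Ioc (0:ℝ) s, b' u := by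
    intro s hs
    refine integral_congr_ae (ae_restrict_of_ae_restrict_of_subset (Set.Ioc_subset_Ioc_right hs) hae)
  calc ∫ s in Set.Ioc (0:ℝ) t, (lam * Real.exp (-lam * s)) * ∫ u in Set.Ioc (0:ℝ) s, b u
      = ∫ s in Set.Ioc (0:ℝ) t, (lam * Real.exp (-lam * s)) * ∫ u in Set.Ioc (0:ℝ) s, b' u := by
        refine setIntegral_congr_fun measurableSet_Ioc fun s hs => ?_
        rw [hsub s hs.2]
    _ = ∫ u in Set.Ioc (0:ℝ) t, (Real.exp (-lam * u) - Real.exp (-lam * t)) * b' u :=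
        keyMeas b' hb'm t ht hb' lam hlam
    _ = ∫ u in Set.Ioc (0:ℝ) t, (Real.exp (-lam * u) - Real.exp (-lam * t)) * b u := by
        refine integral_congr_ae (hae.mono fun u h => ?_)
        simp only [h]

/-- Gronwall-type Lemma 4.3 (inequality version): if `a t ≤ a 0 + ∫_0^t b` on `[0,T]`,
then for every `lam ≥ 0` and `t ∈ [0,T]`,
`e^{−lam t} a t + lam ∫_0^t e^{−lam s} a s ds ≤ a 0 + ∫_0^t e^{−lam s} b s ds`. -/
theorem stmt2 (T : ℝ) (hT : 0 < T) (a b : ℝ → ℝ)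
    (ha : IntegrableOn a (Set.Icc 0 T))
    (hb : IntegrableOn b (Set.Icc 0 T))
    (hab : ∀ t ∈ Set.Icc (0 : ℝ) T, a t ≤ a 0 + ∫ s in (0 : ℝ)..t, b s)
    (lam : ℝ) (hlam : 0 ≤ lam) (t : ℝ) (ht : t ∈ Set.Icc (0 : ℝ) T) :
    Real.exp (-lam * t) * a t + lam * ∫ s in (0 : ℝ)..t, Real.exp (-lam * s) * a s
      ≤ a 0 + ∫ s in (0 : ℝ)..t, Real.exp (-lam * s) * b s := by
  obtain ⟨ht0, htT⟩ := ht
  set B : ℝ → ℝ := fun s => ∫ u in (0:ℝ)..s, b u with hB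
  have hbt : IntegrableOn b (Set.Icc 0 t) := hb.mono_set (Set.Icc_subset_Icc le_rfl htT)
  have hbIoc : IntegrableOn b (Set.Ioc 0 t) := hbt.mono_set Set.Ioc_subset_Icc_self
  have huIcc : Set.uIcc (0:ℝ) t = Set.Icc 0 t := Set.uIcc_of_le ht0
  have hBcont : ContinuousOn B (Set.Icc 0 t) := by
    rw [← huIcc]
    exact intervalIntegral.continuousOn_primitive_interval (by rwa [huIcc])
  have hexp : Continuous fun s : ℝ => Real.exp (-lam * s) :=
    Real.continuous_exp.comp (continuous_const.mul continuous_id)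
  have haIcc : IntegrableOn a (Set.Icc 0 t) := ha.mono_set (Set.Icc_subset_Icc le_rfl htT)
  have hI1 : IntegrableOn (fun s => Real.exp (-lam * s) * a s) (Set.Icc 0 t) :=
    haIcc.continuousOn_mul hexp.continuousOn isCompact_Icc
  have hg : ContinuousOn (fun s => Real.exp (-lam * s) * (a 0 + B s)) (Set.Icc 0 t) :=
    (hexp.continuousOn).mul (continuousOn_const.add hBcont)
  have hI2 : IntegrableOn (fun s => Real.exp (-lam * s) * (a 0 + B s)) (Set.Icc 0 t) :=
    hg.integrableOn_Icc
  have hmono : ∫ s in Set.Ioc (0:ℝ) t, Real.exp (-lam * s) * a s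
      ≤ ∫ s in Set.Ioc (0:ℝ) t, Real.exp (-lam * s) * (a 0 + B s) := by
    refine setIntegral_mono_on (hI1.mono_set Set.Ioc_subset_Icc_self)
      (hI2.mono_set Set.Ioc_subset_Icc_self) measurableSet_Ioc fun s hs => ?_
    exact mul_le_mul_of_nonneg_left (hab s ⟨hs.1.le, hs.2.trans htT⟩) (Real.exp_pos _).le
  have h1 : Real.exp (-lam * t) * a t ≤ Real.exp (-lam * t) * (a 0 + B t) :=
    mul_le_mul_of_nonneg_left (hab t ⟨ht0, htT⟩) (Real.exp_pos _).le
  have hIe : IntegrableOn (fun s => Real.exp (-lam * s) * a 0) (Set.Ioc 0 t) :=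
    ((hexp.mul continuous_const).integrableOn_Icc).mono_set Set.Ioc_subset_Icc_self
  have hIeB : IntegrableOn (fun s => Real.exp (-lam * s) * B s) (Set.Ioc 0 t) :=
    ((hexp.continuousOn.mul hBcont).integrableOn_Icc).mono_set Set.Ioc_subset_Icc_self
  have hsplit : ∫ s in Set.Ioc (0:ℝ) t, Real.exp (-lam * s) * (a 0 + B s)
      = (∫ s in Set.Ioc (0:ℝ) t, Real.exp (-lam * s) * a 0)
        + ∫ s in Set.Ioc (0:ℝ) t, Real.exp (-lam * s) * B s := by
    rw [← integral_add hIe hIeB]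
    refine integral_congr_ae (Filter.Eventually.of_forall fun s => ?_)
    ring
  have hlam1 : lam * ∫ s in Set.Ioc (0:ℝ) t, Real.exp (-lam * s) * a 0
      = (1 - Real.exp (-lam * t)) * a 0 := by
    rw [← integral_const_mul]
    have : (fun s => lam * (Real.exp (-lam * s) * a 0))
        = fun s => (lam * Real.exp (-lam * s)) * a 0 := by ext s; ring
    rw [this, integral_mul_const, ← intervalIntegral.integral_of_le ht0, expInt]
    simp
  have hkey : lam * ∫ s in Set.Ioc (0:ℝ) t, Real.exp (-lam * s) * B s
      = (∫ u in Set.Ioc (0:ℝ) t, Real.exp (-lam * u) * b u)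
        - Real.exp (-lam * t) * ∫ u in Set.Ioc (0:ℝ) t, b u := by
    have hIb1 : IntegrableOn (fun u => Real.exp (-lam * u) * b u) (Set.Ioc 0 t) :=
      (hbt.continuousOn_mul hexp.continuousOn isCompact_Icc).mono_set Set.Ioc_subset_Icc_self
    calc lam * ∫ s in Set.Ioc (0:ℝ) t, Real.exp (-lam * s) * B s
        = ∫ s in Set.Ioc (0:ℝ) t, (lam * Real.exp (-lam * s)) * B s := by
          rw [← integral_const_mul]
          refine integral_congr_ae (Filter.Eventually.of_forall fun s => ?_)
          ring
      _ = ∫ s in Set.Ioc (0:ℝ) t, (lam * Real.exp (-lam * s)) * ∫ u in Set.Ioc (0:ℝ) s, b u := by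
          refine setIntegral_congr_fun measurableSet_Ioc fun s hs => ?_
          rw [hB]
          simp only [intervalIntegral.integral_of_le hs.1.le]
      _ = ∫ u in Set.Ioc (0:ℝ) t, (Real.exp (-lam * u) - Real.exp (-lam * t)) * b u :=
          keyGen b t ht0 hbIoc lam hlam
      _ = (∫ u in Set.Ioc (0:ℝ) t, Real.exp (-lam * u) * b u)
          - Real.exp (-lam * t) * ∫ u in Set.Ioc (0:ℝ) t, b u := by
          rw [← integral_const_mul, ← integral_sub hIb1 (hbIoc.const_mul _)]
          refine integral_congr_ae (Filter.Eventually.of_forall fun u => ?_)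
          ring
  have hBt : B t = ∫ u in Set.Ioc (0:ℝ) t, b u := intervalIntegral.integral_of_le ht0
  have hid : Real.exp (-lam * t) * (a 0 + B t)
      + lam * ∫ s in Set.Ioc (0:ℝ) t, Real.exp (-lam * s) * (a 0 + B s)
      = a 0 + ∫ s in Set.Ioc (0:ℝ) t, Real.exp (-lam * s) * b s := by
    rw [hsplit, mul_add lam, hlam1, hkey, hBt]
    ring
  rw [intervalIntegral.integral_of_le ht0, intervalIntegral.integral_of_le ht0]
  have h2 := mul_le_mul_of_nonneg_left hmono hlam
  linarith [h1, h2, hid]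
end

section
/- For every i with 2 ≤ i ≤ J−1, the function ψ_i (extended by 0 outside (x_{i−2}, x_{i+1}]) is continuously differentiable on [−L, L], satisfies ψ_i(−L) = ψ_i(L) = 0, and is a weak solution of −ψ_i'' = φ_i on (−L, L): for every smooth compactly supported function w on (−L, L), ∫_{−L}^{L} ψ_i'(x) w'(x) dx = ∫_{−L}^{L} φ_i(x) w(x) dx. -/
noncomputable section

open Set

/-- Mesh size `h = 2L/J`. -/
def meshH (L : ℝ) (J : ℕ) : ℝ := 2 * L / J

/-- Grid node `x_i = −L + i·h`. -/
def nodeX (L : ℝ) (J : ℕ) (i : ℕ) : ℝ := -L + i * meshH L J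

/-- The one-dimensional piecewise constant basis functions `φ_i`, `i = 1, …, J`:
`φ_1 = (3/2)·1_{[x_0,x_1]} − (1/2)·1_{(x_1,x_2]}`,
`φ_i = −(1/2)·1_{(x_{i−2},x_{i−1}]} + 1_{(x_{i−1},x_i]} − (1/2)·1_{(x_i,x_{i+1}]}`
for `2 ≤ i ≤ J−1`, and
`φ_J = −(1/2)·1_{(x_{J−2},x_{J−1}]} + (3/2)·1_{(x_{J−1},x_J]}` (zero outside). -/
def phiF (L : ℝ) (J : ℕ) (i : ℕ) : ℝ → ℝ := fun x =>
  if i = 1 then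
    (if x ∈ Icc (nodeX L J 0) (nodeX L J 1) then (3 : ℝ) / 2 else 0)
      + (if x ∈ Ioc (nodeX L J 1) (nodeX L J 2) then -(1 : ℝ) / 2 else 0)
  else if i = J then
    (if x ∈ Ioc (nodeX L J (J - 2)) (nodeX L J (J - 1)) then -(1 : ℝ) / 2 else 0)
      + (if x ∈ Ioc (nodeX L J (J - 1)) (nodeX L J J) then (3 : ℝ) / 2 else 0)
  else
    (if x ∈ Ioc (nodeX L J (i - 2)) (nodeX L J (i - 1)) then -(1 : ℝ) / 2 else 0)
      + (if x ∈ Ioc (nodeX L J (i - 1)) (nodeX L J i) then (1 : ℝ) else 0)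
      + (if x ∈ Ioc (nodeX L J i) (nodeX L J (i + 1)) then -(1 : ℝ) / 2 else 0)

/-- The one-dimensional piecewise quadratic functions `ψ_i = (−Δ)⁻¹ φ_i`,
extended by `0` outside their support. -/
def psiF (L : ℝ) (J : ℕ) (i : ℕ) : ℝ → ℝ := fun x =>
  if i = 1 then
    (if x ∈ Icc (nodeX L J 0) (nodeX L J 1) then
        -(3 : ℝ) / 4 * (x - nodeX L J 0) ^ 2 + meshH L J * (x - nodeX L J 0) else 0)
      + (if x ∈ Ioc (nodeX L J 1) (nodeX L J 2) then
        (1 : ℝ) / 4 * (x - nodeX L J 1) ^ 2 - meshH L J / 2 * (x - nodeX L J 1)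
          + (meshH L J) ^ 2 / 4 else 0)
  else if i = J then
    (if x ∈ Ioc (nodeX L J (J - 2)) (nodeX L J (J - 1)) then
        (1 : ℝ) / 4 * (nodeX L J (J - 1) - x) ^ 2 - meshH L J / 2 * (nodeX L J (J - 1) - x)
          + (meshH L J) ^ 2 / 4 else 0)
      + (if x ∈ Ioc (nodeX L J (J - 1)) (nodeX L J J) then
        -(3 : ℝ) / 4 * (nodeX L J J - x) ^ 2 + meshH L J * (nodeX L J J - x) else 0)
  else
    (if x ∈ Ioc (nodeX L J (i - 2)) (nodeX L J (i - 1)) then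
        (1 : ℝ) / 4 * (x - nodeX L J (i - 2)) ^ 2 else 0)
      + (if x ∈ Ioc (nodeX L J (i - 1)) (nodeX L J i) then
        -(1 : ℝ) / 2 * (x - nodeX L J (i - 1) - meshH L J / 2) ^ 2
          + 3 * (meshH L J) ^ 2 / 8 else 0)
      + (if x ∈ Ioc (nodeX L J i) (nodeX L J (i + 1)) then
        (1 : ℝ) / 4 * (nodeX L J (i + 1) - x) ^ 2 else 0)

open MeasureTheory

lemma hinge_hasDerivAt (x : ℝ) : HasDerivAt (fun t : ℝ => max t 0 ^ 2) (2 * max x 0) x := by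
  rcases lt_trichotomy x 0 with hx | rfl | hx
  · rw [max_eq_right hx.le, mul_zero]
    have h0 : HasDerivAt (fun _ : ℝ => (0:ℝ)) 0 x := hasDerivAt_const x 0
    apply h0.congr_of_eventuallyEq
    filter_upwards [Iio_mem_nhds hx] with t ht
    simp [max_eq_right (le_of_lt (mem_Iio.mp ht))]
  · rw [hasDerivAt_iff_isLittleO]
    simp only [max_self, sub_zero, smul_zero, mul_zero]
    rw [Asymptotics.isLittleO_iff]
    intro c hc
    filter_upwards [Metric.ball_mem_nhds (0:ℝ) hc] with y hy
    rw [mem_ball_zero_iff, Real.norm_eq_abs] at hy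
    have h1 : (0:ℝ) ≤ max y 0 := le_max_right y 0
    have h2 : max y 0 ≤ |y| := max_le (le_abs_self y) (abs_nonneg y)
    simp only [Real.norm_eq_abs]
    have h3 : |(y ⊔ 0) ^ 2 - 0 ^ 2| = max y 0 ^ 2 := by
      simp [abs_of_nonneg (pow_nonneg h1 2)]
    rw [h3]
    nlinarith [abs_nonneg y]
  · rw [max_eq_left hx.le]
    have h0 : HasDerivAt (fun t : ℝ => t ^ 2) (2 * x) x := by
      simpa using hasDerivAt_pow 2 x
    apply h0.congr_of_eventuallyEq
    filter_upwards [Ioi_mem_nhds hx] with t ht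
    simp [max_eq_left (le_of_lt (mem_Ioi.mp ht))]

lemma hingeSq_hasDerivAt (p x : ℝ) :
    HasDerivAt (fun y : ℝ => max (y - p) 0 ^ 2) (2 * max (x - p) 0) x := by
  have h1 := hinge_hasDerivAt (x - p)
  have h2 : HasDerivAt (fun y : ℝ => y - p) 1 x := (hasDerivAt_id x).sub_const p
  have := h1.comp x h2
  simpa [Function.comp_def] using this

/-- Global C¹ representative of ψ_i. -/
noncomputable def HF (a h : ℝ) : ℝ → ℝ := fun x =>
  (1/4 : ℝ) * (max (x - a) 0 ^ 2 - 3 * max (x - (a + h)) 0 ^ 2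
    + 3 * max (x - (a + 2*h)) 0 ^ 2 - max (x - (a + 3*h)) 0 ^ 2)

/-- Its derivative. -/
noncomputable def HF' (a h : ℝ) : ℝ → ℝ := fun x =>
  (1/2 : ℝ) * (max (x - a) 0 - 3 * max (x - (a + h)) 0
    + 3 * max (x - (a + 2*h)) 0 - max (x - (a + 3*h)) 0)

lemma HF_hasDerivAt (a h x : ℝ) : HasDerivAt (HF a h) (HF' a h x) x := by
  have h1 := hingeSq_hasDerivAt a x
  have h2 := hingeSq_hasDerivAt (a + h) x
  have h3 := hingeSq_hasDerivAt (a + 2*h) x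
  have h4 := hingeSq_hasDerivAt (a + 3*h) x
  have hd := (((h1.sub (h2.const_mul 3)).add (h3.const_mul 3)).sub h4).const_mul (1/4 : ℝ)
  have hd' : HasDerivAt (HF a h) _ x := hd
  convert hd' using 1
  simp only [HF']
  ring

lemma HF'_continuous (a h : ℝ) : Continuous (HF' a h) := by
  unfold HF'
  fun_prop

lemma HF_contDiff (a h : ℝ) : ContDiff ℝ 1 (HF a h) := by
  rw [contDiff_one_iff_deriv]
  refine ⟨fun x => (HF_hasDerivAt a h x).differentiableAt, ?_⟩
  have : deriv (HF a h) = HF' a h := funext fun x => (HF_hasDerivAt a h x).deriv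
  rw [this]; exact HF'_continuous a h

lemma indmul_intervalIntegrable {w : ℝ → ℝ} (hw : Continuous w) (p q c r s : ℝ) :
    IntervalIntegrable (fun x => (if x ∈ Ioc p q then c else 0) * w x) volume r s := by
  have h1 : (fun x => (if x ∈ Ioc p q then c else 0) * w x)
      = (Ioc p q).indicator (fun x => c * w x) := by
    funext x; by_cases hx : x ∈ Ioc p q <;> simp [Set.indicator_apply, hx]
  have h2 := ((continuous_const.mul hw).intervalIntegrable r s : IntervalIntegrable (fun x => c * w x) volume r s)
  rw [intervalIntegrable_iff] at h2 ⊢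
  rw [h1]
  exact h2.indicator measurableSet_Ioc

lemma integral_Ioc_congr {f g : ℝ → ℝ} {p q : ℝ} (hpq : p ≤ q)
    (h : ∀ x ∈ Ioc p q, f x = g x) :
    ∫ x in p..q, f x = ∫ x in p..q, g x := by
  rw [intervalIntegral.integral_of_le hpq, intervalIntegral.integral_of_le hpq]
  exact setIntegral_congr_fun measurableSet_Ioc h


set_option maxHeartbeats 1000000 in
/-- For interior indices `2 ≤ i ≤ J−1`, the function `ψ_i` is continuously
differentiable on `[−L,L]`, vanishes at `±L`, and is a weak solution of
`−ψ_i'' = φ_i` on `(−L,L)`. -/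
theorem stmt7 (L : ℝ) (hL : 0 < L) (J : ℕ) (hJ : 3 ≤ J)
    (i : ℕ) (hi : 2 ≤ i) (hi' : i ≤ J - 1) :
    ContDiffOn ℝ 1 (psiF L J i) (Icc (-L) L) ∧
    psiF L J i (-L) = 0 ∧ psiF L J i L = 0 ∧
    ∀ w : ℝ → ℝ, ContDiff ℝ (⊤ : ℕ∞) w → HasCompactSupport w →
      tsupport w ⊆ Ioo (-L) L →
      ∫ x in (-L)..L, deriv (psiF L J i) x * deriv w x
        = ∫ x in (-L)..L, phiF L J i x * w x := by
  have hJ0 : (0:ℝ) < (J:ℝ) := by exact_mod_cast (by omega : 0 < J)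
  have hi1 : i ≠ 1 := by omega
  have hiJ : i ≠ J := by omega
  set hm := meshH L J with hmdef
  have hh : 0 < hm := by rw [hmdef]; unfold meshH; positivity
  set a := nodeX L J (i - 2) with hadef
  have hb : nodeX L J (i - 1) = a + hm := by
    rw [hadef]; unfold nodeX
    rw [Nat.cast_sub (by omega : 1 ≤ i), Nat.cast_sub (by omega : 2 ≤ i)]
    push_cast; ring
  have hc : nodeX L J i = a + 2 * hm := by
    rw [hadef]; unfold nodeX
    rw [Nat.cast_sub (by omega : 2 ≤ i)]
    push_cast; ring
  have hd : nodeX L J (i + 1) = a + 3 * hm := by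
    rw [hadef]; unfold nodeX
    rw [Nat.cast_sub (by omega : 2 ≤ i)]
    push_cast; ring
  have haL : -L ≤ a := by
    rw [hadef]; unfold nodeX
    have : (0:ℝ) ≤ ((i - 2 : ℕ) : ℝ) * meshH L J := by
      apply mul_nonneg (Nat.cast_nonneg _) (le_of_lt (by rw [← hmdef]; exact hh))
    linarith
  have hJh : -L + (J:ℝ) * hm = L := by
    rw [hmdef]; unfold meshH; field_simp; ring
  have hdL : a + 3 * hm ≤ L := by
    have h1 : (i:ℝ) + 1 ≤ (J:ℝ) := by exact_mod_cast (by omega : i + 1 ≤ J)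
    have h2 : ((i:ℝ) + 1) * hm ≤ (J:ℝ) * hm := mul_le_mul_of_nonneg_right h1 hh.le
    have h3 : a = -L + ((i:ℝ) - 2) * hm := by
      rw [hadef]; unfold nodeX; rw [Nat.cast_sub (by omega : 2 ≤ i), ← hmdef]; norm_num
    rw [h3]; nlinarith
  have hpsi : psiF L J i = HF a hm := by
    funext x
    simp only [psiF, if_neg hi1, if_neg hiJ, hb, hc, hd, ← hadef, ← hmdef, mem_Ioc, HF]
    rcases le_or_gt x a with h1 | h1
    · rw [if_neg (by intro hx; linarith [hx.1]), if_neg (by intro hx; linarith [hx.1]),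
        if_neg (by intro hx; linarith [hx.1]),
        max_eq_right (by linarith), max_eq_right (by linarith),
        max_eq_right (by linarith), max_eq_right (by linarith)]
      ring
    · rcases le_or_gt x (a + hm) with h2 | h2
      · rw [if_pos ⟨h1, h2⟩, if_neg (by intro hx; linarith [hx.1]),
          if_neg (by intro hx; linarith [hx.1]),
          max_eq_left (by linarith), max_eq_right (by linarith),
          max_eq_right (by linarith), max_eq_right (by linarith)]
        ring
      · rcases le_or_gt x (a + 2 * hm) with h3 | h3
        · rw [if_neg (by intro hx; linarith [hx.2]), if_pos ⟨h2, h3⟩,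
            if_neg (by intro hx; linarith [hx.1]),
            max_eq_left (by linarith), max_eq_left (by linarith),
            max_eq_right (by linarith), max_eq_right (by linarith)]
          ring
        · rcases le_or_gt x (a + 3 * hm) with h4 | h4
          · rw [if_neg (by intro hx; linarith [hx.2]), if_neg (by intro hx; linarith [hx.2]),
              if_pos ⟨h3, h4⟩,
              max_eq_left (by linarith), max_eq_left (by linarith),
              max_eq_left (by linarith), max_eq_right (by linarith)]
            ring
          · rw [if_neg (by intro hx; linarith [hx.2]), if_neg (by intro hx; linarith [hx.2]),
              if_neg (by intro hx; linarith [hx.2]),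
              max_eq_left (by linarith), max_eq_left (by linarith),
              max_eq_left (by linarith), max_eq_left (by linarith)]
            ring
  refine ⟨?_, ?_, ?_, ?_⟩
  · rw [hpsi]; exact (HF_contDiff a hm).contDiffOn
  · rw [hpsi]
    simp only [HF]
    rw [max_eq_right (by linarith), max_eq_right (by linarith),
      max_eq_right (by linarith), max_eq_right (by linarith)]
    ring
  · rw [hpsi]
    simp only [HF]
    rw [max_eq_left (by linarith), max_eq_left (by linarith),
      max_eq_left (by linarith), max_eq_left (by linarith)]
    ring
  · intro w hw hwsupp hts
    have hwc : Continuous w := hw.continuous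
    have hwc' : Continuous (deriv w) := hw.continuous_deriv (mod_cast le_top)
    have hvd : ∀ x, HasDerivAt w (deriv w x) x :=
      fun x => (hw.differentiable (by simp) x).hasDerivAt
    have hder : deriv (psiF L J i) = HF' a hm := by
      rw [hpsi]; exact funext fun x => (HF_hasDerivAt a hm x).deriv
    rw [hder]
    have hfc : Continuous fun x => HF' a hm x * deriv w x := (HF'_continuous a hm).mul hwc'
    have hint : ∀ p q : ℝ, IntervalIntegrable (fun x => HF' a hm x * deriv w x) volume p q :=
      fun p q => hfc.intervalIntegrable p q
    -- left-hand side pieces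
    have i0 : ∫ x in (-L)..a, HF' a hm x * deriv w x = 0 := by
      have he : EqOn (fun x => HF' a hm x * deriv w x) (fun _ => (0:ℝ)) (uIcc (-L) a) := by
        rw [uIcc_of_le haL]
        intro x hx
        simp only [HF']
        rw [max_eq_right (by linarith [hx.2]), max_eq_right (by linarith [hx.2]),
          max_eq_right (by linarith [hx.2]), max_eq_right (by linarith [hx.2])]
        ring
      rw [intervalIntegral.integral_congr he]
      simp
    have i1 : ∫ x in a..(a + hm), HF' a hm x * deriv w x
        = hm / 2 * w (a + hm) - 1/2 * ∫ x in a..(a + hm), w x := by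
      have he : EqOn (fun x => HF' a hm x * deriv w x)
          (fun x => (1/2 * (x - a)) * deriv w x) (uIcc a (a + hm)) := by
        rw [uIcc_of_le (by linarith)]
        intro x hx
        simp only [HF']
        rw [max_eq_left (by linarith [hx.1]), max_eq_right (by linarith [hx.2]),
          max_eq_right (by linarith [hx.2]), max_eq_right (by linarith [hx.2])]
        ring
      rw [intervalIntegral.integral_congr he,
        intervalIntegral.integral_mul_deriv_eq_deriv_mul
          (u := fun x => 1/2 * (x - a)) (u' := fun _ => (1/2 : ℝ))
          (fun x _ => by simpa using ((hasDerivAt_id x).sub_const a).const_mul (1/2 : ℝ))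
          (fun x _ => hvd x) intervalIntegrable_const (hwc'.intervalIntegrable _ _),
        intervalIntegral.integral_const_mul]
      ring
    have i2 : ∫ x in (a + hm)..(a + 2*hm), HF' a hm x * deriv w x
        = -(hm/2) * w (a + 2*hm) - hm/2 * w (a + hm) + ∫ x in (a + hm)..(a + 2*hm), w x := by
      have he : EqOn (fun x => HF' a hm x * deriv w x)
          (fun x => (1/2 * ((x - a) - 3 * (x - (a + hm)))) * deriv w x)
          (uIcc (a + hm) (a + 2*hm)) := by
        rw [uIcc_of_le (by linarith)]
        intro x hx
        simp only [HF']
        rw [max_eq_left (by linarith [hx.1]), max_eq_left (by linarith [hx.1]),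
          max_eq_right (by linarith [hx.2]), max_eq_right (by linarith [hx.2])]
        ring
      rw [intervalIntegral.integral_congr he,
        intervalIntegral.integral_mul_deriv_eq_deriv_mul
          (u := fun x => 1/2 * ((x - a) - 3 * (x - (a + hm)))) (u' := fun _ => (-1 : ℝ))
          (fun x _ => by
            have hld := (((hasDerivAt_id x).sub_const a).sub
              (((hasDerivAt_id x).sub_const (a + hm)).const_mul 3)).const_mul (1/2 : ℝ)
            convert hld using 1
            all_goals norm_num)
          (fun x _ => hvd x) intervalIntegrable_const (hwc'.intervalIntegrable _ _),
        intervalIntegral.integral_const_mul]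
      ring
    have i3 : ∫ x in (a + 2*hm)..(a + 3*hm), HF' a hm x * deriv w x
        = hm/2 * w (a + 2*hm) - 1/2 * ∫ x in (a + 2*hm)..(a + 3*hm), w x := by
      have he : EqOn (fun x => HF' a hm x * deriv w x)
          (fun x => (1/2 * ((x - a) - 3 * (x - (a + hm)) + 3 * (x - (a + 2*hm)))) * deriv w x)
          (uIcc (a + 2*hm) (a + 3*hm)) := by
        rw [uIcc_of_le (by linarith)]
        intro x hx
        simp only [HF']
        rw [max_eq_left (by linarith [hx.1]), max_eq_left (by linarith [hx.1]),
          max_eq_left (by linarith [hx.1]), max_eq_right (by linarith [hx.2])]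
        ring
      rw [intervalIntegral.integral_congr he,
        intervalIntegral.integral_mul_deriv_eq_deriv_mul
          (u := fun x => 1/2 * ((x - a) - 3 * (x - (a + hm)) + 3 * (x - (a + 2*hm))))
          (u' := fun _ => (1/2 : ℝ))
          (fun x _ => by
            have hld := ((((hasDerivAt_id x).sub_const a).sub
              (((hasDerivAt_id x).sub_const (a + hm)).const_mul 3)).add
              (((hasDerivAt_id x).sub_const (a + 2*hm)).const_mul 3)).const_mul (1/2 : ℝ)
            convert hld using 1
            all_goals norm_num)
          (fun x _ => hvd x) intervalIntegrable_const (hwc'.intervalIntegrable _ _),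
        intervalIntegral.integral_const_mul]
      ring
    have i4 : ∫ x in (a + 3*hm)..L, HF' a hm x * deriv w x = 0 := by
      have he : EqOn (fun x => HF' a hm x * deriv w x) (fun _ => (0:ℝ)) (uIcc (a + 3*hm) L) := by
        rw [uIcc_of_le hdL]
        intro x hx
        simp only [HF']
        rw [max_eq_left (by linarith [hx.1]), max_eq_left (by linarith [hx.1]),
          max_eq_left (by linarith [hx.1]), max_eq_left (by linarith [hx.1])]
        ring
      rw [intervalIntegral.integral_congr he]
      simp
    -- right-hand side pieces
    have hphi : ∀ x, phiF L J i x
        = (if x ∈ Ioc a (a + hm) then -(1:ℝ)/2 else 0)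
          + (if x ∈ Ioc (a + hm) (a + 2*hm) then (1:ℝ) else 0)
          + (if x ∈ Ioc (a + 2*hm) (a + 3*hm) then -(1:ℝ)/2 else 0) := by
      intro x
      simp only [phiF, if_neg hi1, if_neg hiJ, hb, hc, hd, ← hadef]
    have hgint : ∀ p q : ℝ, IntervalIntegrable (fun x => phiF L J i x * w x) volume p q := by
      intro p q
      have heq : (fun x => phiF L J i x * w x)
          = fun x => (if x ∈ Ioc a (a + hm) then -(1:ℝ)/2 else 0) * w x
            + (if x ∈ Ioc (a + hm) (a + 2*hm) then (1:ℝ) else 0) * w x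
            + (if x ∈ Ioc (a + 2*hm) (a + 3*hm) then -(1:ℝ)/2 else 0) * w x := by
        funext x; rw [hphi x]; ring
      rw [heq]
      exact ((indmul_intervalIntegrable hwc _ _ _ p q).add
        (indmul_intervalIntegrable hwc _ _ _ p q)).add (indmul_intervalIntegrable hwc _ _ _ p q)
    have r0 : ∫ x in (-L)..a, phiF L J i x * w x = 0 := by
      have : ∫ x in (-L)..a, phiF L J i x * w x = ∫ x in (-L)..a, (0:ℝ) := by
        apply integral_Ioc_congr haL
        intro x hx
        rw [mem_Ioc] at hx
        rw [hphi x, if_neg, if_neg, if_neg]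
        · ring
        · rw [mem_Ioc]; rintro ⟨h1', h2'⟩; linarith [hx.1, hx.2]
        · rw [mem_Ioc]; rintro ⟨h1', h2'⟩; linarith [hx.1, hx.2]
        · rw [mem_Ioc]; rintro ⟨h1', h2'⟩; linarith [hx.1, hx.2]
      rw [this]; simp
    have r1 : ∫ x in a..(a + hm), phiF L J i x * w x
        = -(1/2) * ∫ x in a..(a + hm), w x := by
      have : ∫ x in a..(a + hm), phiF L J i x * w x
          = ∫ x in a..(a + hm), -(1/2 : ℝ) * w x := by
        apply integral_Ioc_congr (by linarith)
        intro x hx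
        rw [mem_Ioc] at hx
        rw [hphi x, if_pos, if_neg, if_neg]
        · ring
        · rw [mem_Ioc]; rintro ⟨h1', h2'⟩; linarith [hx.1, hx.2]
        · rw [mem_Ioc]; rintro ⟨h1', h2'⟩; linarith [hx.1, hx.2]
        · rw [mem_Ioc]; exact hx
      rw [this, intervalIntegral.integral_const_mul]
    have r2 : ∫ x in (a + hm)..(a + 2*hm), phiF L J i x * w x
        = ∫ x in (a + hm)..(a + 2*hm), w x := by
      apply integral_Ioc_congr (by linarith)
      intro x hx
      rw [mem_Ioc] at hx
      rw [hphi x, if_neg, if_pos, if_neg]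
      · ring
      · rw [mem_Ioc]; rintro ⟨h1', h2'⟩; linarith [hx.1, hx.2]
      · rw [mem_Ioc]; exact hx
      · rw [mem_Ioc]; rintro ⟨h1', h2'⟩; linarith [hx.1, hx.2]
    have r3 : ∫ x in (a + 2*hm)..(a + 3*hm), phiF L J i x * w x
        = -(1/2) * ∫ x in (a + 2*hm)..(a + 3*hm), w x := by
      have : ∫ x in (a + 2*hm)..(a + 3*hm), phiF L J i x * w x
          = ∫ x in (a + 2*hm)..(a + 3*hm), -(1/2 : ℝ) * w x := by
        apply integral_Ioc_congr (by linarith)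
        intro x hx
        rw [mem_Ioc] at hx
        rw [hphi x, if_neg, if_neg, if_pos]
        · ring
        · rw [mem_Ioc]; exact hx
        · rw [mem_Ioc]; rintro ⟨h1', h2'⟩; linarith [hx.1, hx.2]
        · rw [mem_Ioc]; rintro ⟨h1', h2'⟩; linarith [hx.1, hx.2]
      rw [this, intervalIntegral.integral_const_mul]
    have r4 : ∫ x in (a + 3*hm)..L, phiF L J i x * w x = 0 := by
      have : ∫ x in (a + 3*hm)..L, phiF L J i x * w x = ∫ x in (a + 3*hm)..L, (0:ℝ) := by
        apply integral_Ioc_congr hdL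
        intro x hx
        rw [mem_Ioc] at hx
        rw [hphi x, if_neg, if_neg, if_neg]
        · ring
        · rw [mem_Ioc]; rintro ⟨h1', h2'⟩; linarith [hx.1, hx.2]
        · rw [mem_Ioc]; rintro ⟨h1', h2'⟩; linarith [hx.1, hx.2]
        · rw [mem_Ioc]; rintro ⟨h1', h2'⟩; linarith [hx.1, hx.2]
      rw [this]; simp
    -- splitting
    have s1 := intervalIntegral.integral_add_adjacent_intervals (hint (-L) a) (hint a (a + hm))
    have s2 := intervalIntegral.integral_add_adjacent_intervals
      (hint (-L) (a + hm)) (hint (a + hm) (a + 2*hm))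
    have s3 := intervalIntegral.integral_add_adjacent_intervals
      (hint (-L) (a + 2*hm)) (hint (a + 2*hm) (a + 3*hm))
    have s4 := intervalIntegral.integral_add_adjacent_intervals
      (hint (-L) (a + 3*hm)) (hint (a + 3*hm) L)
    have t1 := intervalIntegral.integral_add_adjacent_intervals (hgint (-L) a) (hgint a (a + hm))
    have t2 := intervalIntegral.integral_add_adjacent_intervals
      (hgint (-L) (a + hm)) (hgint (a + hm) (a + 2*hm))
    have t3 := intervalIntegral.integral_add_adjacent_intervals
      (hgint (-L) (a + 2*hm)) (hgint (a + 2*hm) (a + 3*hm))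
    have t4 := intervalIntegral.integral_add_adjacent_intervals
      (hgint (-L) (a + 3*hm)) (hgint (a + 3*hm) L)
    linarith [s1, s2, s3, s4, t1, t2, t3, t4, i0, i1, i2, i3, i4, r0, r1, r2, r3, r4]


end
end

section
/- The function ψ_1 is continuously differentiable on [−L, L], satisfies ψ_1(−L) = ψ_1(L) = 0, and is a weak solution of −ψ_1'' = φ_1 on (−L, L): for every smooth compactly supported function w on (−L, L), ∫_{−L}^{L} ψ_1'(x) w'(x) dx = ∫_{−L}^{L} φ_1(x) w(x) dx. -/
noncomputable section

open Set

/- auxiliary lemmas -/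
lemma aux_sq_max (t : ℝ) : HasDerivAt (fun s : ℝ => max s 0 ^ 2) (2 * max t 0) t := by
  rcases lt_trichotomy t 0 with ht | ht | ht
  · rw [max_eq_right ht.le, mul_zero]
    have h0 : (fun s : ℝ => max s 0 ^ 2) =ᶠ[nhds t] fun _ => (0:ℝ) := by
      filter_upwards [Iio_mem_nhds ht] with s hs
      rw [max_eq_right (le_of_lt hs)]; ring
    exact (hasDerivAt_const t 0).congr_of_eventuallyEq h0
  · subst ht
    rw [max_self, mul_zero]
    rw [hasDerivAt_iff_isLittleO]
    have h : (fun y : ℝ => max y 0 ^ 2 - max 0 0 ^ 2 - (y - 0) • (0:ℝ)) = fun y => max y 0 ^ 2 := by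
      funext y; simp
    rw [h, Asymptotics.isLittleO_iff]
    intro c hc
    filter_upwards [eventually_abs_sub_lt 0 hc] with y hy
    rw [sub_zero] at hy
    have h1 : (0:ℝ) ≤ max y 0 := le_max_right _ _
    have h2 : max y 0 ≤ |y| := max_le (le_abs_self y) (abs_nonneg y)
    have h3 : max y 0 ^ 2 ≤ c * |y| := by nlinarith
    simpa [abs_of_nonneg (pow_nonneg h1 2), Real.norm_eq_abs, sub_zero] using h3
  · rw [max_eq_left ht.le]
    have h0 : (fun s : ℝ => max s 0 ^ 2) =ᶠ[nhds t] fun s => s ^ 2 := by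
      filter_upwards [Ioi_mem_nhds ht] with s hs
      rw [max_eq_left (le_of_lt hs)]
    have h := hasDerivAt_pow 2 t
    exact (by simpa [mul_comm] using h :
      HasDerivAt (fun s : ℝ => s ^ 2) (2 * t) t).congr_of_eventuallyEq h0

lemma aux_sq_max' (c x : ℝ) :
    HasDerivAt (fun y : ℝ => max (c - y) 0 ^ 2) (-(2 * max (c - x) 0)) x := by
  have h1 : HasDerivAt (fun y : ℝ => c - y) (-1) x := (hasDerivAt_id x).const_sub c
  have h := (aux_sq_max (c - x)).comp x h1
  simpa [Function.comp_def] using h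

def auxF (a b : ℝ) : ℝ → ℝ := fun x => 1/4 * max (b - x) 0 ^ 2 - max (a - x) 0 ^ 2

def auxG (a b : ℝ) : ℝ → ℝ := fun x => -(1/2) * max (b - x) 0 + 2 * max (a - x) 0

lemma auxF_hasDeriv (a b x : ℝ) : HasDerivAt (auxF a b) (auxG a b x) x := by
  have h1 := (aux_sq_max' b x).const_mul (1/4 : ℝ)
  have h2 := aux_sq_max' a x
  have h := h1.sub h2
  have e : auxG a b x = 1/4 * -(2 * max (b - x) 0) - -(2 * max (a - x) 0) := by
    unfold auxG; ring
  rw [e]; exact h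

lemma auxG_cont (a b : ℝ) : Continuous (auxG a b) := by
  unfold auxG; fun_prop

lemma auxF_contDiff (a b : ℝ) : ContDiff ℝ 1 (auxF a b) := by
  rw [contDiff_one_iff_deriv]
  refine ⟨fun x => (auxF_hasDeriv a b x).differentiableAt, ?_⟩
  have h : deriv (auxF a b) = auxG a b := funext fun x => (auxF_hasDeriv a b x).deriv
  rw [h]; exact auxG_cont a b

/-- The function `ψ_1` is continuously differentiable on `[−L,L]`, vanishes at `±L`,
and is a weak solution of `−ψ_1'' = φ_1` on `(−L,L)`. -/
theorem stmt8 (L : ℝ) (hL : 0 < L) (J : ℕ) (hJ : 3 ≤ J) :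
    ContDiffOn ℝ 1 (psiF L J 1) (Icc (-L) L) ∧
    psiF L J 1 (-L) = 0 ∧ psiF L J 1 L = 0 ∧
    ∀ w : ℝ → ℝ, ContDiff ℝ (⊤ : ℕ∞) w → HasCompactSupport w →
      tsupport w ⊆ Ioo (-L) L →
      ∫ x in (-L)..L, deriv (psiF L J 1) x * deriv w x
        = ∫ x in (-L)..L, phiF L J 1 x * w x := by
  set m := meshH L J with hm'
  set a := nodeX L J 1 with ha'
  set b := nodeX L J 2 with hb'
  have hJ3 : (3:ℝ) ≤ (J:ℝ) := by exact_mod_cast hJ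
  have hmpos : 0 < m := by
    rw [hm', meshH]; positivity
  have hmL : m ≤ L := by
    rw [hm', meshH]
    rw [div_le_iff₀ (by linarith : (0:ℝ) < (J:ℝ))]
    nlinarith
  have hx0 : nodeX L J 0 = -L := by simp [nodeX]
  have ha : a = -L + m := by rw [ha', hm', nodeX]; push_cast; ring
  have hb : b = -L + 2 * m := by rw [hb', hm', nodeX]; push_cast; ring
  have hLa : -L < a := by rw [ha]; linarith
  have hab : a < b := by rw [ha, hb]; linarith
  have hbL : b ≤ L := by rw [hb]; linarith
  -- pointwise descriptions
  have hpsiE : ∀ x : ℝ, psiF L J 1 x =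
      (if x ∈ Icc (-L) a then -(3:ℝ)/4 * (x - -L)^2 + m * (x - -L) else 0)
        + (if x ∈ Ioc a b then (1:ℝ)/4 * (x - a)^2 - m/2 * (x - a) + m^2/4 else 0) := by
    intro x
    simp only [psiF]
    rw [if_pos trivial, hx0, ← ha', ← hb', ← hm']
  have hphiE : ∀ x : ℝ, phiF L J 1 x =
      (if x ∈ Icc (-L) a then (3:ℝ)/2 else 0) + (if x ∈ Ioc a b then -(1:ℝ)/2 else 0) := by
    intro x
    simp only [phiF]
    rw [if_pos trivial, hx0, ← ha', ← hb']
  -- psiF agrees with auxF on [-L, L]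
  have hpsi : Set.EqOn (psiF L J 1) (auxF a b) (Icc (-L) L) := by
    intro x hx
    obtain ⟨hx1, hx2⟩ := hx
    rw [hpsiE x]
    unfold auxF
    rcases le_or_gt x a with hxa | hxa
    · rw [if_pos ⟨hx1, hxa⟩, if_neg (fun hc => absurd hc.1 (not_lt.2 hxa))]
      rw [max_eq_left (by linarith : (0:ℝ) ≤ b - x), max_eq_left (by linarith : (0:ℝ) ≤ a - x)]
      rw [ha, hb]; ring
    · rcases le_or_gt x b with hxb | hxb
      · rw [if_neg (fun hc : x ∈ Icc (-L) a => absurd hc.2 (not_le.2 hxa)), if_pos ⟨hxa, hxb⟩]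
        rw [max_eq_left (by linarith : (0:ℝ) ≤ b - x),
          max_eq_right (by linarith : a - x ≤ 0)]
        rw [ha, hb]; ring
      · rw [if_neg (fun hc : x ∈ Icc (-L) a => absurd hc.2 (not_le.2 hxa)),
          if_neg (fun hc : x ∈ Ioc a b => absurd hc.2 (not_le.2 hxb))]
        rw [max_eq_right (by linarith : b - x ≤ 0), max_eq_right (by linarith : a - x ≤ 0)]
        norm_num
  refine ⟨((auxF_contDiff a b).contDiffOn).congr hpsi, ?_, ?_, ?_⟩
  · rw [hpsi (show (-L) ∈ Icc (-L) L from ⟨le_refl _, by linarith⟩)]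
    unfold auxF
    rw [max_eq_left (by linarith : (0:ℝ) ≤ b - -L), max_eq_left (by linarith : (0:ℝ) ≤ a - -L)]
    rw [ha, hb]; ring
  · rw [hpsi (show L ∈ Icc (-L) L from ⟨by linarith, le_refl _⟩)]
    unfold auxF
    rw [max_eq_right (by linarith : b - L ≤ 0), max_eq_right (by linarith : a - L ≤ 0)]
    norm_num
  intro w hw hws hsub
  have hwc : Continuous w := hw.continuous
  have hw'c : Continuous (deriv w) := hw.continuous_deriv (by exact_mod_cast le_top)
  have hwd : ∀ x : ℝ, HasDerivAt w (deriv w x) x :=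
    fun x => (hw.differentiable (by simp) x).hasDerivAt
  have hwL : w (-L) = 0 := by
    apply image_eq_zero_of_notMem_tsupport
    intro hmem
    exact absurd (hsub hmem).1 (lt_irrefl _)
  -- derivative of psiF equals auxG on the open interval
  have hderiveq : ∀ x ∈ Ioo (-L) L, deriv (psiF L J 1) x = auxG a b x := by
    intro x hx
    have h1 : psiF L J 1 =ᶠ[nhds x] auxF a b :=
      hpsi.eventuallyEq_of_mem (Icc_mem_nhds hx.1 hx.2)
    rw [h1.deriv_eq, (auxF_hasDeriv a b x).deriv]
  have hLL : (-L : ℝ) ≤ L := by linarith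
  have e1 : (∫ x in (-L)..L, deriv (psiF L J 1) x * deriv w x)
      = ∫ x in (-L)..L, auxG a b x * deriv w x := by
    apply intervalIntegral.integral_congr_ae
    have hne : ∀ᵐ x : ℝ, x ≠ L := by
      rw [MeasureTheory.ae_iff]
      have hset : {x : ℝ | ¬ x ≠ L} = {L} := by ext y; simp
      rw [hset]
      exact MeasureTheory.measure_singleton L
    filter_upwards [hne] with x hxne hxmem
    rw [Set.uIoc_of_le hLL] at hxmem
    rw [hderiveq x ⟨hxmem.1, lt_of_le_of_ne hxmem.2 hxne⟩]
  -- congr helpers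
  have congrI : ∀ (c d : ℝ) (f₁ f₂ : ℝ → ℝ), c ≤ d → Set.EqOn f₁ f₂ (Ioc c d) →
      (∫ x in c..d, f₁ x) = ∫ x in c..d, f₂ x := by
    intro c d f₁ f₂ hcd heq
    apply intervalIntegral.integral_congr_ae
    filter_upwards with x hx
    exact heq (by rwa [Set.uIoc_of_le hcd] at hx)
  have intgI : ∀ (c d : ℝ) (f₁ f₂ : ℝ → ℝ), c ≤ d → Set.EqOn f₁ f₂ (Ioc c d) →
      Continuous f₂ → IntervalIntegrable f₁ MeasureTheory.volume c d := by
    intro c d f₁ f₂ hcd heq hf₂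
    rw [intervalIntegrable_iff, Set.uIoc_of_le hcd]
    exact (hf₂.integrableOn_Ioc).congr_fun heq.symm measurableSet_Ioc
  -- EqOn facts on the three pieces
  have E1 : Set.EqOn (fun x => phiF L J 1 x * w x) (fun x => (3:ℝ)/2 * w x) (Ioc (-L) a) := by
    intro x hx
    simp only
    rw [hphiE x, if_pos ⟨hx.1.le, hx.2⟩,
      if_neg (fun hc : x ∈ Ioc a b => absurd hc.1 (not_lt.2 hx.2)), add_zero]
  have E2 : Set.EqOn (fun x => phiF L J 1 x * w x) (fun x => -(1:ℝ)/2 * w x) (Ioc a b) := by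
    intro x hx
    simp only
    rw [hphiE x, if_neg (fun hc : x ∈ Icc (-L) a => absurd hc.2 (not_le.2 hx.1)),
      if_pos hx, zero_add]
  have E3 : Set.EqOn (fun x => phiF L J 1 x * w x) (fun _ => (0:ℝ)) (Ioc b L) := by
    intro x hx
    simp only
    rw [hphiE x, if_neg (fun hc : x ∈ Icc (-L) a => absurd hc.2 (not_le.2 (by linarith [hx.1]))),
      if_neg (fun hc : x ∈ Ioc a b => absurd hc.2 (not_le.2 hx.1))]
    ring
  have G1 : Set.EqOn (fun x => auxG a b x * deriv w x)
      (fun x => (-(1/2) * (b - x) + 2 * (a - x)) * deriv w x) (Ioc (-L) a) := by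
    intro x hx
    simp only
    unfold auxG
    rw [max_eq_left (by linarith [hx.2] : (0:ℝ) ≤ b - x),
      max_eq_left (by linarith [hx.2] : (0:ℝ) ≤ a - x)]
  have G2 : Set.EqOn (fun x => auxG a b x * deriv w x)
      (fun x => (-(1/2) * (b - x)) * deriv w x) (Ioc a b) := by
    intro x hx
    simp only
    unfold auxG
    rw [max_eq_left (by linarith [hx.2] : (0:ℝ) ≤ b - x),
      max_eq_right (by linarith [hx.1] : a - x ≤ 0)]
    ring
  have G3 : Set.EqOn (fun x => auxG a b x * deriv w x) (fun _ => (0:ℝ)) (Ioc b L) := by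
    intro x hx
    simp only
    unfold auxG
    rw [max_eq_right (by linarith [hx.1] : b - x ≤ 0),
      max_eq_right (by linarith [hx.1] : a - x ≤ 0)]
    ring
  -- split the LHS integral
  have hcontG : Continuous (fun x => auxG a b x * deriv w x) := (auxG_cont a b).mul hw'c
  have i1 := hcontG.intervalIntegrable (μ := MeasureTheory.volume) (-L) a
  have i2 := hcontG.intervalIntegrable (μ := MeasureTheory.volume) a b
  have i12 := hcontG.intervalIntegrable (μ := MeasureTheory.volume) (-L) b
  have i3 := hcontG.intervalIntegrable (μ := MeasureTheory.volume) b L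
  have s1 := intervalIntegral.integral_add_adjacent_intervals i1 i2
  have s2 := intervalIntegral.integral_add_adjacent_intervals i12 i3
  -- split the RHS integral
  have j1 := intgI (-L) a _ _ hLa.le E1 (continuous_const.mul hwc)
  have j2 := intgI a b _ _ hab.le E2 (continuous_const.mul hwc)
  have j3 := intgI b L _ _ hbL E3 continuous_const
  have j12 : IntervalIntegrable (fun x => phiF L J 1 x * w x) MeasureTheory.volume (-L) b :=
    j1.trans j2
  have t1 := intervalIntegral.integral_add_adjacent_intervals j1 j2
  have t2 := intervalIntegral.integral_add_adjacent_intervals j12 j3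
  -- integration by parts on the first piece
  have parts1 : (∫ x in (-L)..a, (-(1/2) * (b - x) + 2 * (a - x)) * deriv w x)
      = (-(1/2) * (b - a) + 2 * (a - a)) * w a - (-(1/2) * (b - -L) + 2 * (a - -L)) * w (-L)
        - ∫ x in (-L)..a, (-(3:ℝ)/2) * w x := by
    apply intervalIntegral.integral_mul_deriv_eq_deriv_mul (u' := fun _ => (-(3:ℝ)/2))
    · intro x _
      have h1 : HasDerivAt (fun y : ℝ => -(1/2) * (b - y) + 2 * (a - y))
          (-(1/2) * (-1) + 2 * (-1)) x :=
        (((hasDerivAt_id x).const_sub b).const_mul (-(1/2))).add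
          (((hasDerivAt_id x).const_sub a).const_mul 2)
      exact h1.congr_deriv (by norm_num)
    · intro x _; exact hwd x
    · exact intervalIntegrable_const
    · exact hw'c.intervalIntegrable _ _
  have parts2 : (∫ x in a..b, (-(1/2) * (b - x)) * deriv w x)
      = (-(1/2) * (b - b)) * w b - (-(1/2) * (b - a)) * w a
        - ∫ x in a..b, ((1:ℝ)/2) * w x := by
    apply intervalIntegral.integral_mul_deriv_eq_deriv_mul (u' := fun _ => ((1:ℝ)/2))
    · intro x _
      have h1 : HasDerivAt (fun y : ℝ => -(1/2) * (b - y)) (-(1/2) * (-1)) x :=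
        ((hasDerivAt_id x).const_sub b).const_mul (-(1/2))
      exact h1.congr_deriv (by norm_num)
    · intro x _; exact hwd x
    · exact intervalIntegrable_const
    · exact hw'c.intervalIntegrable _ _
  -- sign normalizations
  have neg1 : (∫ x in (-L)..a, (-(3:ℝ)/2) * w x) = -∫ x in (-L)..a, (3:ℝ)/2 * w x := by
    have h : ∀ x : ℝ, (-(3:ℝ)/2) * w x = -((3:ℝ)/2 * w x) := fun x => by ring
    simp_rw [h, intervalIntegral.integral_neg]
  have neg2 : (∫ x in a..b, -(1:ℝ)/2 * w x) = -∫ x in a..b, ((1:ℝ)/2) * w x := by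
    have h : ∀ x : ℝ, (-(1:ℝ)/2) * w x = -(((1:ℝ)/2) * w x) := fun x => by ring
    simp_rw [h, intervalIntegral.integral_neg]
  -- combine
  have c1 := congrI (-L) a _ _ hLa.le G1
  have c2 := congrI a b _ _ hab.le G2
  have c3 := congrI b L _ _ hbL G3
  have c1' := congrI (-L) a _ _ hLa.le E1
  have c2' := congrI a b _ _ hab.le E2
  have c3' := congrI b L _ _ hbL E3
  rw [e1]
  simp only [intervalIntegral.integral_zero] at c3 c3'
  rw [hwL] at parts1
  linarith [parts1, parts2, neg1, neg2, s1, s2, t1, t2, c1, c2, c3, c1', c2', c3']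

end
end

section
/- Define Ψ(x) = ∏_{k=1}^d ψ_k(x_k) and Φ(x) = Σ_{k=1}^d φ_k(x_k) ∏_{l≠k} ψ_l(x_l) for x ∈ D = (−L, L)^d. Then Ψ is continuously differentiable on the closure of D, Ψ vanishes on the boundary of D, and Ψ is a weak solution of −ΔΨ = Φ: for every smooth compactly supported function w on D, ∫_D ∇Ψ(x) · ∇w(x) dx = ∫_D Φ(x) w(x) dx. -/
open MeasureTheory Set


lemma aux_slice (L : ℝ) (hL : 0 < L) (n : ℕ)
    (Dk φk : ℝ → ℝ)
    (Ψ : Fin (n+1) → ℝ → ℝ)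
    (k : Fin (n+1))
    (w : (Fin (n+1) → ℝ) → ℝ) (hw : ContDiff ℝ (⊤:ℕ∞) w)
    (hwsupp : tsupport w ⊆ Set.pi univ fun _ => Ioo (-L) L)
    (hweak : ∀ g : ℝ → ℝ, ContDiff ℝ (⊤:ℕ∞) g → HasCompactSupport g → tsupport g ⊆ Ioo (-L) L →
      ∫ t in (-L)..L, Dk t * deriv g t = ∫ t in (-L)..L, φk t * g t)
    (hGint : Integrable (fun x : Fin (n+1) → ℝ =>
      Dk (x k) * (∏ l ∈ Finset.univ.erase k, Ψ l (x l)) * fderiv ℝ w x (Pi.single k 1)))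
    (hHint : Integrable (fun x : Fin (n+1) → ℝ =>
      φk (x k) * (∏ l ∈ Finset.univ.erase k, Ψ l (x l)) * w x)) :
    ∫ x : Fin (n+1) → ℝ,
        Dk (x k) * (∏ l ∈ Finset.univ.erase k, Ψ l (x l)) * fderiv ℝ w x (Pi.single k 1)
      = ∫ x : Fin (n+1) → ℝ,
          φk (x k) * (∏ l ∈ Finset.univ.erase k, Ψ l (x l)) * w x := by
  have hLL : -L < L := by linarith
  set G : (Fin (n+1) → ℝ) → ℝ := fun x =>
    Dk (x k) * (∏ l ∈ Finset.univ.erase k, Ψ l (x l)) * fderiv ℝ w x (Pi.single k 1) with hG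
  set H : (Fin (n+1) → ℝ) → ℝ := fun x =>
    φk (x k) * (∏ l ∈ Finset.univ.erase k, Ψ l (x l)) * w x with hH
  set e := MeasurableEquiv.piFinSuccAbove (fun _ : Fin (n+1) => ℝ) k with he
  have hmp := MeasureTheory.volume_preserving_piFinSuccAbove (fun _ : Fin (n+1) => ℝ) k
  have hesymm : ∀ p : ℝ × (Fin n → ℝ), e.symm p = Fin.insertNth k p.1 p.2 := fun p => rfl
  have hemb := e.symm.measurableEmbedding
  have hmps := hmp.symm e
  have key : ∀ y : Fin n → ℝ,
      (∫ t : ℝ, G (e.symm (t, y))) = ∫ t : ℝ, H (e.symm (t, y)) := by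
    intro y
    set c : Fin (n+1) → ℝ := Fin.insertNth k 0 y with hc
    set v : Fin (n+1) → ℝ := Pi.single k 1 with hv
    have haff : ∀ t : ℝ, (e.symm (t, y) : Fin (n+1) → ℝ) = c + t • v := by
      intro t
      rw [hesymm (t, y)]
      funext l
      refine Fin.succAboveCases k ?_ ?_ l
      · simp [hc, hv]
      · intro j
        simp [hc, hv, Pi.single_eq_of_ne (Fin.succAbove_ne k j)]
    have hck : ∀ t : ℝ, (c + t • v) k = t := by intro t; simp [hc, hv]
    have hcl : ∀ (t : ℝ) (l), l ≠ k → (c + t • v) l = c l := by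
      intro t l hl; simp [hv, Pi.single_eq_of_ne hl]
    set g : ℝ → ℝ := fun t => w (c + t • v) with hgdef
    have hgsm : ContDiff ℝ (⊤:ℕ∞) g :=
      hw.comp (contDiff_const.add (contDiff_id.smul contDiff_const))
    have hgd : ∀ t : ℝ, HasDerivAt g (fderiv ℝ w (c + t • v) v) t := by
      intro t
      have h1 : HasDerivAt (fun t : ℝ => c + t • v) v t := by
        simpa using ((hasDerivAt_id t).smul_const v).const_add c
      exact ((hw.differentiable (by norm_num) (c + t • v)).hasFDerivAt).comp_hasDerivAt t h1
    have hsupp_g : tsupport g ⊆ Ioo (-L) L := by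
      have hA : IsClosed {t : ℝ | c + t • v ∈ tsupport w} :=
        (isClosed_tsupport w).preimage (by fun_prop)
      have h2 : tsupport g ⊆ {t : ℝ | c + t • v ∈ tsupport w} :=
        closure_minimal (fun t ht => subset_closure ht) hA
      intro t ht
      have h3 := hwsupp (h2 ht) k (mem_univ k)
      simpa [hck t] using h3
    have hgcs : HasCompactSupport g :=
      HasCompactSupport.intro isCompact_Icc fun t ht =>
        image_eq_zero_of_notMem_tsupport fun hmem => ht (Ioo_subset_Icc_self (hsupp_g hmem))
    have hprod : ∀ t : ℝ, (∏ l ∈ Finset.univ.erase k, Ψ l ((c + t • v) l))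
        = ∏ l ∈ Finset.univ.erase k, Ψ l (c l) := by
      intro t; refine Finset.prod_congr rfl fun l hl => ?_
      rw [hcl t l (Finset.ne_of_mem_erase hl)]
    set C := ∏ l ∈ Finset.univ.erase k, Ψ l (c l) with hCdef
    have hGform : ∀ t : ℝ, G (e.symm (t, y)) = C * (Dk t * deriv g t) := by
      intro t
      rw [haff t, hG]
      simp only
      rw [hck t, hprod t, (hgd t).deriv]
      ring
    have hHform : ∀ t : ℝ, H (e.symm (t, y)) = C * (φk t * g t) := by
      intro t
      rw [haff t, hH]
      simp only
      rw [hck t, hprod t]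
      ring
    have hvan1 : ∀ t : ℝ, t ∉ Ioo (-L) L → Dk t * deriv g t = 0 := by
      intro t ht
      have hx : (c + t • v) ∉ tsupport w := fun hmem => ht (by simpa [hck t] using hwsupp hmem k (mem_univ k))
      have hz : fderiv ℝ w (c + t • v) = 0 :=
        Function.notMem_support.mp fun h => hx (support_fderiv_subset ℝ h)
      rw [(hgd t).deriv, hz]
      simp
    have hvan2 : ∀ t : ℝ, t ∉ Ioo (-L) L → φk t * g t = 0 := by
      intro t ht
      have : g t = 0 := image_eq_zero_of_notMem_tsupport fun hmem => ht (hsupp_g hmem)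
      rw [this, mul_zero]
    calc (∫ t : ℝ, G (e.symm (t, y))) = ∫ t : ℝ, C * (Dk t * deriv g t) := by simp_rw [hGform]
      _ = C * ∫ t : ℝ, Dk t * deriv g t := integral_const_mul C _
      _ = C * ∫ t in Ioo (-L) L, Dk t * deriv g t := by
          rw [← setIntegral_eq_integral_of_forall_compl_eq_zero hvan1]
      _ = C * ∫ t in (-L)..L, Dk t * deriv g t := by
          rw [intervalIntegral.integral_of_le hLL.le, integral_Ioc_eq_integral_Ioo]
      _ = C * ∫ t in (-L)..L, φk t * g t := by rw [hweak g hgsm hgcs hsupp_g]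
      _ = C * ∫ t in Ioo (-L) L, φk t * g t := by
          rw [intervalIntegral.integral_of_le hLL.le, integral_Ioc_eq_integral_Ioo]
      _ = C * ∫ t : ℝ, φk t * g t := by
          rw [setIntegral_eq_integral_of_forall_compl_eq_zero hvan2]
      _ = ∫ t : ℝ, C * (φk t * g t) := (integral_const_mul C _).symm
      _ = ∫ t : ℝ, H (e.symm (t, y)) := by simp_rw [hHform]
  have hGi2 : Integrable (G ∘ e.symm) ((volume : Measure ℝ).prod volume) := by
    rw [← Measure.volume_eq_prod]
    exact (hmps.integrable_comp_emb hemb).mpr hGint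
  have hHi2 : Integrable (H ∘ e.symm) ((volume : Measure ℝ).prod volume) := by
    rw [← Measure.volume_eq_prod]
    exact (hmps.integrable_comp_emb hemb).mpr hHint
  calc ∫ x, G x = ∫ p : ℝ × (Fin n → ℝ), G (e.symm p) := (hmps.integral_comp' G).symm
    _ = ∫ t : ℝ, ∫ y : Fin n → ℝ, G (e.symm (t, y)) := by
        rw [Measure.volume_eq_prod]
        exact integral_prod _ hGi2
    _ = ∫ y : Fin n → ℝ, ∫ t : ℝ, G (e.symm (t, y)) := by
        exact integral_integral_swap (f := fun t y => G (e.symm (t, y))) hGi2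
    _ = ∫ y : Fin n → ℝ, ∫ t : ℝ, H (e.symm (t, y)) :=
        integral_congr_ae (Filter.Eventually.of_forall fun y => key y)
    _ = ∫ t : ℝ, ∫ y : Fin n → ℝ, H (e.symm (t, y)) := by
        exact (integral_integral_swap (f := fun t y => H (e.symm (t, y))) hHi2).symm
    _ = ∫ p : ℝ × (Fin n → ℝ), H (e.symm p) := by
        rw [Measure.volume_eq_prod]
        exact (integral_prod _ hHi2).symm
    _ = ∫ x, H x := hmps.integral_comp' H


lemma aux_fderiv (L : ℝ) (d : ℕ) (ψ : Fin d → ℝ → ℝ)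
    (hψ : ∀ k, ContDiffOn ℝ 1 (ψ k) (Icc (-L) L))
    (k : Fin d) (x : Fin d → ℝ) (hx : x ∈ Set.pi univ fun _ : Fin d => Ioo (-L) L) :
    fderiv ℝ (fun y : Fin d → ℝ => ∏ l, ψ l (y l)) x (Pi.single k 1)
      = deriv (ψ k) (x k) * ∏ l ∈ Finset.univ.erase k, ψ l (x l) := by
  have hdf : ∀ l : Fin d, HasFDerivAt (fun y : Fin d → ℝ => ψ l (y l))
      (deriv (ψ l) (x l) • (ContinuousLinearMap.proj l : (Fin d → ℝ) →L[ℝ] ℝ)) x := by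
    intro l
    have hxl := hx l (mem_univ l)
    have hmem : Icc (-L) L ∈ nhds (x l) := Icc_mem_nhds hxl.1 hxl.2
    have hdiff : DifferentiableAt ℝ (ψ l) (x l) :=
      ((hψ l).differentiableOn one_ne_zero).differentiableAt hmem
    have hproj := (ContinuousLinearMap.proj (R := ℝ) (φ := fun _ : Fin d => ℝ) l).hasFDerivAt (x := x)
    exact hdiff.hasDerivAt.comp_hasFDerivAt x hproj
  have hP : HasFDerivAt (fun y : Fin d → ℝ => ∏ l, ψ l (y l))
      (∑ i, (∏ j ∈ Finset.univ.erase i, ψ j (x j)) •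
        (deriv (ψ i) (x i) • (ContinuousLinearMap.proj i : (Fin d → ℝ) →L[ℝ] ℝ))) x :=
    HasFDerivAt.finset_prod fun i _ => hdf i
  rw [hP.fderiv, ContinuousLinearMap.sum_apply]
  rw [Finset.sum_eq_single k]
  · simp [mul_comm]
  · intro i _ hik
    simp [Pi.single_eq_of_ne hik]
  · intro h; exact absurd (Finset.mem_univ k) h


/-- Tensorization principle behind the `d`-dimensional basis: if each `ψ_k` is `C¹`
on `[−L,L]` with `ψ_k(±L) = 0` and is a weak solution of `−ψ_k'' = φ_k` on `(−L,L)`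
(with `φ_k` bounded measurable), then `Ψ(x) = ∏_k ψ_k(x_k)` is `C¹` on the closed
cube, vanishes on the boundary of `D = (−L,L)^d` and is a weak solution of
`−ΔΨ = Φ` with `Φ(x) = Σ_k φ_k(x_k) ∏_{l≠k} ψ_l(x_l)`. -/
theorem stmt10 (L : ℝ) (hL : 0 < L) (d : ℕ) (hd : 1 ≤ d)
    (ψ φ : Fin d → ℝ → ℝ)
    (hψ : ∀ k, ContDiffOn ℝ 1 (ψ k) (Icc (-L) L))
    (hψL : ∀ k, ψ k (-L) = 0) (hψR : ∀ k, ψ k L = 0)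
    (hφmeas : ∀ k, Measurable (φ k))
    (hφbdd : ∀ k, ∃ M : ℝ, ∀ x : ℝ, |φ k x| ≤ M)
    (hweak : ∀ k, ∀ w : ℝ → ℝ, ContDiff ℝ (⊤ : ℕ∞) w → HasCompactSupport w →
      tsupport w ⊆ Ioo (-L) L →
      ∫ x in (-L)..L, deriv (ψ k) x * deriv w x = ∫ x in (-L)..L, φ k x * w x) :
    ContDiffOn ℝ 1 (fun x : Fin d → ℝ => ∏ k, ψ k (x k))
      (Set.pi Set.univ fun _ => Icc (-L) L) ∧
    (∀ x ∈ frontier (Set.pi Set.univ fun _ : Fin d => Ioo (-L) L),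
      (∏ k, ψ k (x k)) = 0) ∧
    ∀ w : (Fin d → ℝ) → ℝ, ContDiff ℝ (⊤ : ℕ∞) w → HasCompactSupport w →
      tsupport w ⊆ Set.pi Set.univ (fun _ : Fin d => Ioo (-L) L) →
      ∫ x in Set.pi Set.univ (fun _ : Fin d => Ioo (-L) L),
          ∑ k, fderiv ℝ (fun y : Fin d → ℝ => ∏ l, ψ l (y l)) x (Pi.single k 1)
            * fderiv ℝ w x (Pi.single k 1)
        = ∫ x in Set.pi Set.univ (fun _ : Fin d => Ioo (-L) L),
            (∑ k, φ k (x k) * ∏ l ∈ Finset.univ.erase k, ψ l (x l)) * w x := by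
  have hLle : -L ≤ L := by linarith
  have hLlt : -L < L := by linarith
  refine ⟨?_, ?_, ?_⟩
  · -- C¹ on the closed cube
    apply contDiffOn_prod
    intro l _
    have hproj : ContDiff ℝ 1 (fun x : Fin d → ℝ => x l) :=
      (ContinuousLinearMap.proj (R := ℝ) (φ := fun _ : Fin d => ℝ) l).contDiff
    exact (hψ l).comp hproj.contDiffOn fun x hx => hx l (mem_univ l)
  · -- vanishes on the boundary
    intro x hx
    obtain ⟨hxc, hxi⟩ := hx
    rw [IsOpen.interior_eq (isOpen_set_pi finite_univ fun _ _ => isOpen_Ioo)] at hxi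
    have hxcl : x ∈ Set.pi univ fun _ : Fin d => Icc (-L) L := by
      have hcl : closure (Set.pi univ fun _ : Fin d => Ioo (-L) L)
          = Set.pi univ fun _ : Fin d => closure (Ioo (-L) L) := closure_pi_set _ _
      rw [hcl] at hxc
      intro i hi
      have := hxc i hi
      rwa [closure_Ioo (by linarith : (-L) ≠ L)] at this
    obtain ⟨k, hk⟩ : ∃ k, x k ∉ Ioo (-L) L := by
      by_contra h; push_neg at h; exact hxi fun i _ => h i
    have hxk := hxcl k (mem_univ k)
    have hcases : x k = -L ∨ x k = L := by
      rcases hxk with ⟨h1, h2⟩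
      rcases lt_or_eq_of_le h1 with h1' | h1'
      · rcases lt_or_eq_of_le h2 with h2' | h2'
        · exact absurd ⟨h1', h2'⟩ hk
        · exact Or.inr h2'
      · exact Or.inl h1'.symm
    apply Finset.prod_eq_zero (Finset.mem_univ k)
    rcases hcases with h | h
    · rw [h]; exact hψL k
    · rw [h]; exact hψR k
  · -- weak solution
    intro w hw hwc hwsupp
    obtain ⟨n, rfl⟩ : ∃ n, d = n + 1 := ⟨d - 1, by omega⟩
    -- the extended coordinate functions
    set Ψt : Fin (n+1) → ℝ → ℝ :=
      fun l => IccExtend hLle ((Icc (-L) L).restrict (ψ l)) with hΨt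
    have hΨcont : ∀ l, Continuous (Ψt l) := fun l =>
      Continuous.Icc_extend' (continuousOn_iff_continuous_restrict.mp (hψ l).continuousOn)
    have hΨeq : ∀ l, ∀ t ∈ Icc (-L) L, Ψt l t = ψ l t := by
      intro l t ht
      simp only [hΨt, IccExtend_of_mem hLle _ ht, restrict_apply]
      rfl
    set D := Set.pi univ fun _ : Fin (n+1) => Ioo (-L) L with hD
    set Q := Set.pi univ fun _ : Fin (n+1) => Icc (-L) L with hQ
    have hDopen : IsOpen D := isOpen_set_pi finite_univ fun _ _ => isOpen_Ioo
    have hDmeas : MeasurableSet D := hDopen.measurableSet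
    have hDQ : D ⊆ Q := fun x hx i hi => Ioo_subset_Icc_self (hx i hi)
    have hQmeas : MeasurableSet Q := MeasurableSet.univ_pi fun _ => measurableSet_Icc
    have hQcomp : IsCompact Q := isCompact_univ_pi fun _ => isCompact_Icc
    set G : Fin (n+1) → (Fin (n+1) → ℝ) → ℝ := fun k x =>
      deriv (ψ k) (x k) * (∏ l ∈ Finset.univ.erase k, Ψt l (x l))
        * fderiv ℝ w x (Pi.single k 1) with hGdef
    set Hf : Fin (n+1) → (Fin (n+1) → ℝ) → ℝ := fun k x =>
      φ k (x k) * (∏ l ∈ Finset.univ.erase k, Ψt l (x l)) * w x with hHdef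
    have hfw0 : ∀ x, x ∉ D → fderiv ℝ w x = 0 := fun x hx =>
      Function.notMem_support.mp fun h => hx (hwsupp (support_fderiv_subset ℝ h))
    have hw0 : ∀ x, x ∉ D → w x = 0 := fun x hx =>
      image_eq_zero_of_notMem_tsupport fun h => hx (hwsupp h)
    have hG0 : ∀ k x, x ∉ D → G k x = 0 := by
      intro k x hx; simp [hGdef, hfw0 x hx]
    have hH0 : ∀ k x, x ∉ D → Hf k x = 0 := by
      intro k x hx; simp [hHdef, hw0 x hx]
    -- pointwise identification of the left-hand integrand
    have hGeq : ∀ (k) (x : Fin (n+1) → ℝ),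
        fderiv ℝ (fun y : Fin (n+1) → ℝ => ∏ l, ψ l (y l)) x (Pi.single k 1)
          * fderiv ℝ w x (Pi.single k 1) = G k x := by
      intro k x
      by_cases hx : x ∈ D
      · rw [aux_fderiv L (n+1) ψ hψ k x hx]
        have hpr : (∏ l ∈ Finset.univ.erase k, ψ l (x l))
            = ∏ l ∈ Finset.univ.erase k, Ψt l (x l) :=
          Finset.prod_congr rfl fun l _ => (hΨeq l (x l) (hDQ hx l (mem_univ l))).symm
        rw [hGdef]
        simp only
        rw [hpr]
      · rw [hfw0 x hx, hG0 k x hx]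
        simp
    -- bounds
    obtain ⟨M1, hM1⟩ : ∃ M1 : Fin (n+1) → ℝ, ∀ k, ∀ t ∈ Icc (-L) L,
        ‖derivWithin (ψ k) (Icc (-L) L) t‖ ≤ M1 k := by
      choose M1 hM1 using fun k => isCompact_Icc.exists_bound_of_continuousOn
        ((hψ k).continuousOn_derivWithin (uniqueDiffOn_Icc hLlt) le_rfl)
      exact ⟨M1, hM1⟩
    obtain ⟨M2, hM2⟩ : ∃ M2 : Fin (n+1) → ℝ, ∀ l, ∀ t ∈ Icc (-L) L, ‖Ψt l t‖ ≤ M2 l := by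
      choose M2 hM2 using fun l =>
        isCompact_Icc.exists_bound_of_continuousOn (hΨcont l).continuousOn
      exact ⟨M2, hM2⟩
    obtain ⟨Mf, hMf⟩ : ∃ M, ∀ x, ‖fderiv ℝ w x‖ ≤ M :=
      (hwc.fderiv ℝ).exists_bound_of_continuous (hw.continuous_fderiv (by norm_num))
    obtain ⟨Mw, hMw⟩ : ∃ M, ∀ x, ‖w x‖ ≤ M := hwc.exists_bound_of_continuous hw.continuous
    have hM1n : ∀ k, 0 ≤ M1 k := fun k =>
      le_trans (norm_nonneg _) (hM1 k (-L) ⟨le_refl _, hLle⟩)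
    have hM2n : ∀ l, 0 ≤ M2 l := fun l =>
      le_trans (norm_nonneg _) (hM2 l (-L) ⟨le_refl _, hLle⟩)
    have hMfn : 0 ≤ Mf := le_trans (norm_nonneg _) (hMf 0)
    have hMwn : 0 ≤ Mw := le_trans (norm_nonneg _) (hMw 0)
    have hprodbd : ∀ k, ∀ x ∈ Q, |∏ l ∈ Finset.univ.erase k, Ψt l (x l)|
        ≤ ∏ l ∈ Finset.univ.erase k, M2 l := by
      intro k x hx
      rw [Finset.abs_prod]
      refine Finset.prod_le_prod (fun l _ => abs_nonneg _) fun l _ => ?_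
      exact hM2 l (x l) (hx l (mem_univ l))
    -- generic integrability criterion
    have hint : ∀ F : (Fin (n+1) → ℝ) → ℝ, AEStronglyMeasurable F volume →
        (∀ x, x ∉ D → F x = 0) → ∀ C : ℝ, 0 ≤ C → (∀ x ∈ D, |F x| ≤ C) → Integrable F := by
      intro F hFm hF0 C hC0 hC
      refine Integrable.mono' (g := Q.indicator fun _ => C) ?_ hFm ?_
      · exact (integrable_indicator_iff hQmeas).mpr
          ((integrableOn_const_iff (C := C) (by simp)).mpr (Or.inr hQcomp.measure_lt_top))
      · refine Filter.Eventually.of_forall fun x => ?_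
        by_cases hx : x ∈ D
        · rw [indicator_of_mem (hDQ hx)]
          simpa [Real.norm_eq_abs] using hC x hx
        · rw [hF0 x hx]
          simp only [norm_zero]
          exact indicator_nonneg (fun _ _ => hC0) x
    have hGmeas : ∀ k, AEStronglyMeasurable (G k) volume := by
      intro k
      have h1 : Measurable fun x : Fin (n+1) → ℝ => deriv (ψ k) (x k) :=
        (measurable_deriv (ψ k)).comp (measurable_pi_apply k)
      have h2 : Continuous fun x : Fin (n+1) → ℝ => ∏ l ∈ Finset.univ.erase k, Ψt l (x l) :=
        continuous_finset_prod _ fun l _ => (hΨcont l).comp (continuous_apply l)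
      have h3 : Continuous fun x : Fin (n+1) → ℝ => fderiv ℝ w x (Pi.single k 1) :=
        (hw.continuous_fderiv (by norm_num)).clm_apply continuous_const
      exact ((h1.mul h2.measurable).mul h3.measurable).aestronglyMeasurable
    have hHmeas : ∀ k, AEStronglyMeasurable (Hf k) volume := by
      intro k
      have h1 : Measurable fun x : Fin (n+1) → ℝ => φ k (x k) :=
        (hφmeas k).comp (measurable_pi_apply k)
      have h2 : Continuous fun x : Fin (n+1) → ℝ => ∏ l ∈ Finset.univ.erase k, Ψt l (x l) :=
        continuous_finset_prod _ fun l _ => (hΨcont l).comp (continuous_apply l)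
      exact ((h1.mul h2.measurable).mul hw.continuous.measurable).aestronglyMeasurable
    have hGint : ∀ k, Integrable (G k) := by
      intro k
      have hPn : 0 ≤ ∏ l ∈ Finset.univ.erase k, M2 l := Finset.prod_nonneg fun l _ => hM2n l
      refine hint (G k) (hGmeas k) (hG0 k)
        (M1 k * (∏ l ∈ Finset.univ.erase k, M2 l) * (Mf * ‖Pi.single (M := fun _ : Fin (n+1) => ℝ) k 1‖))
        (mul_nonneg (mul_nonneg (hM1n k) hPn) (mul_nonneg hMfn (norm_nonneg _))) ?_
      intro x hx
      have hd1 : |deriv (ψ k) (x k)| ≤ M1 k := by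
        have hxk := hx k (mem_univ k)
        rw [← derivWithin_of_mem_nhds (Icc_mem_nhds hxk.1 hxk.2)]
        exact hM1 k (x k) (hDQ hx k (mem_univ k))
      have hd3 : |fderiv ℝ w x (Pi.single k 1)| ≤ Mf * ‖Pi.single (M := fun _ : Fin (n+1) => ℝ) k 1‖ := by
        calc |fderiv ℝ w x (Pi.single k 1)| ≤ ‖fderiv ℝ w x‖ * ‖Pi.single (M := fun _ : Fin (n+1) => ℝ) k 1‖ :=
              (fderiv ℝ w x).le_opNorm _
          _ ≤ Mf * ‖Pi.single (M := fun _ : Fin (n+1) => ℝ) k 1‖ := by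
              gcongr; exact hMf x
      calc |G k x| = |deriv (ψ k) (x k)| * |∏ l ∈ Finset.univ.erase k, Ψt l (x l)|
            * |fderiv ℝ w x (Pi.single k 1)| := by
            rw [hGdef]; simp only; rw [abs_mul, abs_mul]
        _ ≤ M1 k * (∏ l ∈ Finset.univ.erase k, M2 l)
            * (Mf * ‖Pi.single (M := fun _ : Fin (n+1) => ℝ) k 1‖) :=
            mul_le_mul (mul_le_mul hd1 (hprodbd k x (hDQ hx)) (abs_nonneg _) (hM1n k))
              hd3 (abs_nonneg _) (mul_nonneg (hM1n k) hPn)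
    obtain ⟨Mφ, hMφ⟩ : ∃ Mφ : Fin (n+1) → ℝ, ∀ k t, |φ k t| ≤ Mφ k := by
      choose Mφ hMφ using hφbdd
      exact ⟨Mφ, hMφ⟩
    have hMφn : ∀ k, 0 ≤ Mφ k := fun k => le_trans (abs_nonneg _) (hMφ k 0)
    have hHint : ∀ k, Integrable (Hf k) := by
      intro k
      have hPn : 0 ≤ ∏ l ∈ Finset.univ.erase k, M2 l := Finset.prod_nonneg fun l _ => hM2n l
      refine hint (Hf k) (hHmeas k) (hH0 k)
        (Mφ k * (∏ l ∈ Finset.univ.erase k, M2 l) * Mw)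
        (mul_nonneg (mul_nonneg (hMφn k) hPn) hMwn) ?_
      intro x hx
      calc |Hf k x| = |φ k (x k)| * |∏ l ∈ Finset.univ.erase k, Ψt l (x l)| * |w x| := by
            rw [hHdef]; simp only; rw [abs_mul, abs_mul]
        _ ≤ Mφ k * (∏ l ∈ Finset.univ.erase k, M2 l) * Mw :=
            mul_le_mul (mul_le_mul (hMφ k (x k)) (hprodbd k x (hDQ hx)) (abs_nonneg _) (hMφn k))
              (by simpa [Real.norm_eq_abs] using hMw x) (abs_nonneg _)
              (mul_nonneg (hMφn k) hPn)
    have hRHS : ∀ x ∈ D, (∑ k, φ k (x k) * ∏ l ∈ Finset.univ.erase k, ψ l (x l)) * w x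
        = ∑ k, Hf k x := by
      intro x hx
      rw [Finset.sum_mul]
      refine Finset.sum_congr rfl fun k _ => ?_
      have hpr : (∏ l ∈ Finset.univ.erase k, ψ l (x l))
          = ∏ l ∈ Finset.univ.erase k, Ψt l (x l) :=
        Finset.prod_congr rfl fun l _ => (hΨeq l (x l) (hDQ hx l (mem_univ l))).symm
      rw [hHdef]
      simp only
      rw [hpr]
    calc ∫ x in D, ∑ k, fderiv ℝ (fun y : Fin (n+1) → ℝ => ∏ l, ψ l (y l)) x (Pi.single k 1)
            * fderiv ℝ w x (Pi.single k 1)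
        = ∫ x in D, ∑ k, G k x := by
          refine setIntegral_congr_fun hDmeas fun x _ => ?_
          exact Finset.sum_congr rfl fun k _ => hGeq k x
      _ = ∫ x, ∑ k, G k x := by
          refine setIntegral_eq_integral_of_forall_compl_eq_zero fun x hx => ?_
          exact Finset.sum_eq_zero fun k _ => hG0 k x hx
      _ = ∑ k, ∫ x, G k x := integral_finset_sum _ fun k _ => hGint k
      _ = ∑ k, ∫ x, Hf k x := by
          refine Finset.sum_congr rfl fun k _ => ?_
          exact aux_slice L hL n (deriv (ψ k)) (φ k) Ψt k w hw hwsupp (hweak k)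
            (hGint k) (hHint k)
      _ = ∫ x, ∑ k, Hf k x := (integral_finset_sum _ fun k _ => hHint k).symm
      _ = ∫ x in D, ∑ k, Hf k x := by
          refine (setIntegral_eq_integral_of_forall_compl_eq_zero fun x hx => ?_).symm
          exact Finset.sum_eq_zero fun k _ => hH0 k x hx
      _ = ∫ x in D, (∑ k, φ k (x k) * ∏ l ∈ Finset.univ.erase k, ψ l (x l)) * w x :=
          (setIntegral_congr_fun hDmeas fun x hx => hRHS x hx).symm
end

section
/- Let 2 ≤ j_1, j_2 ≤ J−1 and define the two-dimensional basis function Φ_{(j_1,j_2)}(x_1, x_2) = (3/(2h²)) [ φ_{j_1}(x_1) ψ_{j_2}(x_2) + ψ_{j_1}(x_1) φ_{j_2}(x_2) ]. Then for every cell index 𝐢 = (i_1, i_2) ∈ {1, …, J}², the cell average (1/h²) ∫_{D_𝐢} Φ_{(j_1,j_2)} equals 1 if 𝐢 = (j_1, j_2); equals −1/8 if max(|i_1 − j_1|, |i_2 − j_2|) = 1; and equals 0 if max(|i_1 − j_1|, |i_2 − j_2|) ≥ 2. -/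
noncomputable section

open Set

/-- The two-dimensional basis function
`Φ_{(j_1,j_2)}(x_1,x_2) = (3/(2h²))[φ_{j_1}(x_1)ψ_{j_2}(x_2) + ψ_{j_1}(x_1)φ_{j_2}(x_2)]`. -/
def Phi2 (L : ℝ) (J : ℕ) (j : ℕ × ℕ) : ℝ × ℝ → ℝ := fun x =>
  3 / (2 * (meshH L J) ^ 2) *
    (phiF L J j.1 x.1 * psiF L J j.2 x.2 + psiF L J j.1 x.1 * phiF L J j.2 x.2)


lemma isq (a b c : ℝ) : ∫ x in a..b, (x - c)^2 = ((b-c)^3 - (a-c)^3)/3 := by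
  have hd : ∀ x : ℝ, HasDerivAt (fun y : ℝ => (y - c)^3/3) ((x - c)^2) x := by
    intro x
    have h1 : HasDerivAt (fun y : ℝ => y - c) 1 x := (hasDerivAt_id x).sub_const c
    have h2 := (h1.pow 3).div_const 3
    exact h2.congr_deriv (by norm_num)
  rw [intervalIntegral.integral_eq_sub_of_hasDerivAt (fun x _ => hd x)
    ((Continuous.intervalIntegrable (by continuity) _ _))]
  ring

lemma quad_mid (a h : ℝ) : ∫ x in a..(a+h), (-(1:ℝ)/2 * (x - a - h/2)^2 + 3*h^2/8) = h^3/3 := by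
  have he : ∀ x : ℝ, -(1:ℝ)/2 * (x - a - h/2)^2 + 3*h^2/8
      = -(1:ℝ)/2 * (x - (a + h/2))^2 + 3*h^2/8 := by intro x; ring
  simp only [he]
  rw [intervalIntegral.integral_add
      ((Continuous.intervalIntegrable (by continuity) _ _))
      (intervalIntegrable_const),
    intervalIntegral.integral_const_mul, isq, intervalIntegral.integral_const]
  simp [smul_eq_mul]; ring

lemma quad_s1 (a h : ℝ) : ∫ x in a..(a+h), ((1:ℝ)/4 * (x - a)^2) = h^3/12 := by
  rw [intervalIntegral.integral_const_mul, isq]; ring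

lemma quad_s2 (a h : ℝ) : ∫ x in a..(a+h), ((1:ℝ)/4 * (a + h - x)^2) = h^3/12 := by
  have he : ∀ x : ℝ, (1:ℝ)/4 * (a + h - x)^2 = (1:ℝ)/4 * (x - (a+h))^2 := by intro x; ring
  simp only [he]
  rw [intervalIntegral.integral_const_mul, isq]; ring

lemma iic {f : ℝ → ℝ} (g : ℝ → ℝ) {a b : ℝ} (hab : a ≤ b) (h : ∀ x ∈ Set.Ioc a b, f x = g x) :
    ∫ x in a..b, f x = ∫ x in a..b, g x := by
  rw [intervalIntegral.integral_of_le hab, intervalIntegral.integral_of_le hab]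
  exact MeasureTheory.setIntegral_congr_fun measurableSet_Ioc h

lemma ite_ii {s : Set ℝ} [DecidablePred (· ∈ s)] (hs : MeasurableSet s) {p : ℝ → ℝ} (hp : Continuous p) (a b : ℝ) :
    IntervalIntegrable (fun x => if x ∈ s then p x else 0) MeasureTheory.volume a b := by
  have he : (fun x => if x ∈ s then p x else 0) = s.indicator p := by
    funext x; simp [Set.indicator_apply]
  rw [he, intervalIntegrable_iff]
  exact (intervalIntegrable_iff.mp (hp.intervalIntegrable a b)).indicator hs

section Lemmas
open MeasureTheory intervalIntegral

variable {L : ℝ} {J : ℕ}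

lemma hmesh (hL : 0 < L) (hJ : 3 ≤ J) : 0 < meshH L J := by
  have : (0:ℝ) < J := by exact_mod_cast Nat.lt_of_lt_of_le (by norm_num) hJ
  unfold meshH; positivity

lemma hmono (hL : 0 < L) (hJ : 3 ≤ J) {a b : ℕ} (hab : a ≤ b) :
    nodeX L J a ≤ nodeX L J b := by
  unfold nodeX
  have h1 : (a:ℝ) ≤ b := by exact_mod_cast hab
  nlinarith [hmesh hL hJ]

lemma hstep (hL : 0 < L) (hJ : 3 ≤ J) {i : ℕ} (hi : 1 ≤ i) :
    nodeX L J i = nodeX L J (i-1) + meshH L J := by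
  unfold nodeX
  have h1 : ((i-1:ℕ):ℝ) = (i:ℝ) - 1 := by
    have := Nat.cast_sub hi (R := ℝ); simpa using this
  rw [h1]; ring

lemma phi_ii (L : ℝ) (J : ℕ) (j : ℕ) (a b : ℝ) :
    IntervalIntegrable (phiF L J j) MeasureTheory.volume a b := by
  unfold phiF
  by_cases h1 : j = 1
  · simp only [if_pos h1]
    exact (ite_ii measurableSet_Icc continuous_const a b).add
      (ite_ii measurableSet_Ioc continuous_const a b)
  · simp only [if_neg h1]
    by_cases h2 : j = J
    · simp only [if_pos h2]
      exact (ite_ii measurableSet_Ioc continuous_const a b).add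
        (ite_ii measurableSet_Ioc continuous_const a b)
    · simp only [if_neg h2]
      exact ((ite_ii measurableSet_Ioc continuous_const a b).add
        (ite_ii measurableSet_Ioc continuous_const a b)).add
        (ite_ii measurableSet_Ioc continuous_const a b)

lemma psi_ii (L : ℝ) (J : ℕ) (j : ℕ) (a b : ℝ) :
    IntervalIntegrable (psiF L J j) MeasureTheory.volume a b := by
  unfold psiF
  by_cases h1 : j = 1
  · simp only [if_pos h1]
    exact (ite_ii measurableSet_Icc (by continuity) a b).add
      (ite_ii measurableSet_Ioc (by continuity) a b)
  · simp only [if_neg h1]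
    by_cases h2 : j = J
    · simp only [if_pos h2]
      exact (ite_ii measurableSet_Ioc (by continuity) a b).add
        (ite_ii measurableSet_Ioc (by continuity) a b)
    · simp only [if_neg h2]
      exact ((ite_ii measurableSet_Ioc (by continuity) a b).add
        (ite_ii measurableSet_Ioc (by continuity) a b)).add
        (ite_ii measurableSet_Ioc (by continuity) a b)

lemma int_phi (hL : 0 < L) (hJ : 3 ≤ J) {j i : ℕ}
    (hj : 2 ≤ j) (hj' : j ≤ J - 1) (hi : 1 ≤ i) (hi' : i ≤ J) :
    ∫ x in nodeX L J (i-1)..nodeX L J i, phiF L J j x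
      = if i = j then meshH L J else
        if i + 1 = j ∨ i = j + 1 then -(meshH L J)/2 else 0 := by
  have hj1 : j ≠ 1 := by omega
  have hjJ : j ≠ J := by omega
  have hab : nodeX L J (i-1) ≤ nodeX L J i := hmono hL hJ (by omega)
  have hsub : nodeX L J i - nodeX L J (i-1) = meshH L J := by
    rw [hstep hL hJ hi]; ring
  simp only [phiF, if_neg hj1, if_neg hjJ]
  by_cases e1 : i = j
  · subst e1
    rw [if_pos rfl, iic (fun _ => (1:ℝ)) hab ?_, intervalIntegral.integral_const]
    · rw [smul_eq_mul, hsub]; ring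
    · intro x hx
      simp only [Set.mem_Ioc] at hx
      rw [if_neg (by simp only [Set.mem_Ioc, not_and, not_le]; intro _; exact hx.1),
        if_pos (Set.mem_Ioc.mpr hx),
        if_neg (by simp only [Set.mem_Ioc, not_and, not_le]; intro h; linarith [hx.2])]
      ring
  · by_cases e2 : i + 1 = j
    · rw [if_neg e1, if_pos (Or.inl e2),
        iic (fun _ => -(1:ℝ)/2) hab ?_, intervalIntegral.integral_const]
      · rw [smul_eq_mul, hsub]; ring
      · intro x hx
        simp only [Set.mem_Ioc] at hx
        have k : nodeX L J i ≤ nodeX L J j := hmono hL hJ (by omega)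
        rw [if_pos (Set.mem_Ioc.mpr ⟨by rw [(by omega : j-2 = i-1)]; exact hx.1,
            by rw [(by omega : j-1 = i)]; exact hx.2⟩),
          if_neg (by simp only [Set.mem_Ioc, not_and, not_le]; intro h; rw [(by omega : j-1 = i)] at h; linarith [hx.2]),
          if_neg (by simp only [Set.mem_Ioc, not_and, not_le]; intro h; linarith [hx.2])]
        ring
    · by_cases e3 : i = j + 1
      · rw [if_neg e1, if_pos (Or.inr e3),
          iic (fun _ => -(1:ℝ)/2) hab ?_, intervalIntegral.integral_const]
        · rw [smul_eq_mul, hsub]; ring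
        · intro x hx
          simp only [Set.mem_Ioc] at hx
          have k : nodeX L J (j-1) ≤ nodeX L J (i-1) := hmono hL hJ (by omega)
          rw [if_neg (by simp only [Set.mem_Ioc, not_and, not_le]; intro _; linarith [hx.1]),
            if_neg (by simp only [Set.mem_Ioc, not_and, not_le]; intro _; rw [(by omega : j = i-1)]; exact hx.1),
            if_pos (Set.mem_Ioc.mpr ⟨by rw [(by omega : j = i-1)]; exact hx.1,
              by rw [(by omega : j+1 = i)]; exact hx.2⟩)]
          ring
      · rw [if_neg e1, if_neg (by push_neg; exact ⟨e2, e3⟩),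
          iic (fun _ => (0:ℝ)) hab ?_]
        · simp
        · intro x hx
          simp only [Set.mem_Ioc] at hx
          rcases Nat.lt_or_ge i j with hlt | hge
          · have k1 : nodeX L J i ≤ nodeX L J (j-2) := hmono hL hJ (by omega)
            have k2 : nodeX L J (j-2) ≤ nodeX L J (j-1) := hmono hL hJ (by omega)
            have k3 : nodeX L J (j-1) ≤ nodeX L J j := hmono hL hJ (by omega)
            rw [if_neg (by simp only [Set.mem_Ioc, not_and, not_le]; intro h; linarith [hx.2]),
              if_neg (by simp only [Set.mem_Ioc, not_and, not_le]; intro h; linarith [hx.2]),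
              if_neg (by simp only [Set.mem_Ioc, not_and, not_le]; intro h; linarith [hx.2])]
            ring
          · have k1 : nodeX L J (j+1) ≤ nodeX L J (i-1) := hmono hL hJ (by omega)
            have k2 : nodeX L J j ≤ nodeX L J (j+1) := hmono hL hJ (by omega)
            have k3 : nodeX L J (j-1) ≤ nodeX L J j := hmono hL hJ (by omega)
            rw [if_neg (by simp only [Set.mem_Ioc, not_and, not_le]; intro _; linarith [hx.1]),
              if_neg (by simp only [Set.mem_Ioc, not_and, not_le]; intro _; linarith [hx.1]),
              if_neg (by simp only [Set.mem_Ioc, not_and, not_le]; intro _; linarith [hx.1])]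
            ring

lemma int_psi (hL : 0 < L) (hJ : 3 ≤ J) {j i : ℕ}
    (hj : 2 ≤ j) (hj' : j ≤ J - 1) (hi : 1 ≤ i) (hi' : i ≤ J) :
    ∫ x in nodeX L J (i-1)..nodeX L J i, psiF L J j x
      = if i = j then (meshH L J)^3/3 else
        if i + 1 = j ∨ i = j + 1 then (meshH L J)^3/12 else 0 := by
  have hj1 : j ≠ 1 := by omega
  have hjJ : j ≠ J := by omega
  have hab : nodeX L J (i-1) ≤ nodeX L J i := hmono hL hJ (by omega)
  have hstp : nodeX L J i = nodeX L J (i-1) + meshH L J := hstep hL hJ hi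
  simp only [psiF, if_neg hj1, if_neg hjJ]
  by_cases e1 : i = j
  · subst e1
    rw [if_pos rfl, iic (fun x => -(1:ℝ)/2 * (x - nodeX L J (i-1) - meshH L J/2)^2
        + 3*(meshH L J)^2/8) hab ?_]
    · rw [hstp]; exact quad_mid _ _
    · intro x hx
      simp only [Set.mem_Ioc] at hx
      rw [if_neg (by simp only [Set.mem_Ioc, not_and, not_le]; intro _; exact hx.1),
        if_pos (Set.mem_Ioc.mpr hx),
        if_neg (by simp only [Set.mem_Ioc, not_and, not_le]; intro h; linarith [hx.2])]
      ring
  · by_cases e2 : i + 1 = j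
    · rw [if_neg e1, if_pos (Or.inl e2),
        iic (fun x => (1:ℝ)/4 * (x - nodeX L J (i-1))^2) hab ?_]
      · rw [hstp]; exact quad_s1 _ _
      · intro x hx
        simp only [Set.mem_Ioc] at hx
        have k : nodeX L J i ≤ nodeX L J j := hmono hL hJ (by omega)
        rw [if_pos (Set.mem_Ioc.mpr ⟨by rw [(by omega : j-2 = i-1)]; exact hx.1,
            by rw [(by omega : j-1 = i)]; exact hx.2⟩),
          if_neg (by simp only [Set.mem_Ioc, not_and, not_le]; intro h; rw [(by omega : j-1 = i)] at h; linarith [hx.2]),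
          if_neg (by simp only [Set.mem_Ioc, not_and, not_le]; intro h; linarith [hx.2])]
        rw [(by omega : j - 2 = i - 1)]
        ring
    · by_cases e3 : i = j + 1
      · rw [if_neg e1, if_pos (Or.inr e3),
          iic (fun x => (1:ℝ)/4 * (nodeX L J (i-1) + meshH L J - x)^2) hab ?_]
        · rw [hstp]; exact quad_s2 _ _
        · intro x hx
          simp only [Set.mem_Ioc] at hx
          have k : nodeX L J (j-1) ≤ nodeX L J (i-1) := hmono hL hJ (by omega)
          rw [if_neg (by simp only [Set.mem_Ioc, not_and, not_le]; intro _; linarith [hx.1]),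
            if_neg (by simp only [Set.mem_Ioc, not_and, not_le]; intro _; rw [(by omega : j = i-1)]; exact hx.1),
            if_pos (Set.mem_Ioc.mpr ⟨by rw [(by omega : j = i-1)]; exact hx.1,
              by rw [(by omega : j+1 = i)]; exact hx.2⟩)]
          rw [(by omega : j + 1 = i), hstp]
          ring
      · rw [if_neg e1, if_neg (by push_neg; exact ⟨e2, e3⟩),
          iic (fun _ => (0:ℝ)) hab ?_]
        · simp
        · intro x hx
          simp only [Set.mem_Ioc] at hx
          rcases Nat.lt_or_ge i j with hlt | hge
          · have k1 : nodeX L J i ≤ nodeX L J (j-2) := hmono hL hJ (by omega)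
            have k2 : nodeX L J (j-2) ≤ nodeX L J (j-1) := hmono hL hJ (by omega)
            have k3 : nodeX L J (j-1) ≤ nodeX L J j := hmono hL hJ (by omega)
            rw [if_neg (by simp only [Set.mem_Ioc, not_and, not_le]; intro h; linarith [hx.2]),
              if_neg (by simp only [Set.mem_Ioc, not_and, not_le]; intro h; linarith [hx.2]),
              if_neg (by simp only [Set.mem_Ioc, not_and, not_le]; intro h; linarith [hx.2])]
            ring
          · have k1 : nodeX L J (j+1) ≤ nodeX L J (i-1) := hmono hL hJ (by omega)
            have k2 : nodeX L J j ≤ nodeX L J (j+1) := hmono hL hJ (by omega)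
            have k3 : nodeX L J (j-1) ≤ nodeX L J j := hmono hL hJ (by omega)
            rw [if_neg (by simp only [Set.mem_Ioc, not_and, not_le]; intro _; linarith [hx.1]),
              if_neg (by simp only [Set.mem_Ioc, not_and, not_le]; intro _; linarith [hx.1]),
              if_neg (by simp only [Set.mem_Ioc, not_and, not_le]; intro _; linarith [hx.1])]
            ring

end Lemmas
/-- Cell averages of the interior two-dimensional basis functions: for
`2 ≤ j_1, j_2 ≤ J−1` the cell average `(1/h²)∫_{D_𝐢} Φ_{(j_1,j_2)}` equals `1` on the
cell `(j_1,j_2)`, `−1/8` on the eight neighbouring cells, and `0` on all cells with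
Chebyshev distance `≥ 2`. -/
theorem stmt11 (L : ℝ) (hL : 0 < L) (J : ℕ) (hJ : 3 ≤ J)
    (j1 j2 : ℕ) (hj1 : 2 ≤ j1) (hj1' : j1 ≤ J - 1) (hj2 : 2 ≤ j2) (hj2' : j2 ≤ J - 1)
    (i1 i2 : ℕ) (hi1 : 1 ≤ i1) (hi1' : i1 ≤ J) (hi2 : 1 ≤ i2) (hi2' : i2 ≤ J) :
    ((i1 = j1 ∧ i2 = j2) →
      ((meshH L J) ^ 2)⁻¹ *
        ∫ x in nodeX L J (i1 - 1)..nodeX L J i1,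
          ∫ y in nodeX L J (i2 - 1)..nodeX L J i2, Phi2 L J (j1, j2) (x, y)
      = 1) ∧
    (max |(i1 : ℤ) - (j1 : ℤ)| |(i2 : ℤ) - (j2 : ℤ)| = 1 →
      ((meshH L J) ^ 2)⁻¹ *
        ∫ x in nodeX L J (i1 - 1)..nodeX L J i1,
          ∫ y in nodeX L J (i2 - 1)..nodeX L J i2, Phi2 L J (j1, j2) (x, y)
      = -(1 / 8)) ∧
    (2 ≤ max |(i1 : ℤ) - (j1 : ℤ)| |(i2 : ℤ) - (j2 : ℤ)| →
      ((meshH L J) ^ 2)⁻¹ *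
        ∫ x in nodeX L J (i1 - 1)..nodeX L J i1,
          ∫ y in nodeX L J (i2 - 1)..nodeX L J i2, Phi2 L J (j1, j2) (x, y)
      = 0) := by
  have hh := hmesh hL hJ
  have hne : meshH L J ≠ 0 := ne_of_gt hh
  have e1φ := int_phi hL hJ hj1 hj1' hi1 hi1'
  have e1ψ := int_psi hL hJ hj1 hj1' hi1 hi1'
  have e2φ := int_phi hL hJ hj2 hj2' hi2 hi2'
  have e2ψ := int_psi hL hJ hj2 hj2' hi2 hi2'
  have inner : ∀ x : ℝ,
      (∫ y in nodeX L J (i2-1)..nodeX L J i2, Phi2 L J (j1, j2) (x, y))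
        = 3 / (2 * (meshH L J)^2) *
          (phiF L J j1 x * (∫ y in nodeX L J (i2-1)..nodeX L J i2, psiF L J j2 y)
            + psiF L J j1 x * (∫ y in nodeX L J (i2-1)..nodeX L J i2, phiF L J j2 y)) := by
    intro x
    simp only [Phi2]
    rw [intervalIntegral.integral_const_mul]
    congr 1
    rw [intervalIntegral.integral_add
        ((psi_ii L J j2 _ _).const_mul _) ((phi_ii L J j2 _ _).const_mul _),
      intervalIntegral.integral_const_mul, intervalIntegral.integral_const_mul]
  have key : ((meshH L J) ^ 2)⁻¹ *
      ∫ x in nodeX L J (i1 - 1)..nodeX L J i1,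
        ∫ y in nodeX L J (i2 - 1)..nodeX L J i2, Phi2 L J (j1, j2) (x, y)
      = ((meshH L J) ^ 2)⁻¹ * (3 / (2 * (meshH L J)^2) *
        ((if i1 = j1 then meshH L J else
            if i1 + 1 = j1 ∨ i1 = j1 + 1 then -(meshH L J)/2 else 0) *
          (if i2 = j2 then (meshH L J)^3/3 else
            if i2 + 1 = j2 ∨ i2 = j2 + 1 then (meshH L J)^3/12 else 0)
        + (if i1 = j1 then (meshH L J)^3/3 else
            if i1 + 1 = j1 ∨ i1 = j1 + 1 then (meshH L J)^3/12 else 0) *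
          (if i2 = j2 then meshH L J else
            if i2 + 1 = j2 ∨ i2 = j2 + 1 then -(meshH L J)/2 else 0))) := by
    congr 1
    simp only [inner]
    rw [intervalIntegral.integral_const_mul,
      intervalIntegral.integral_add
        ((phi_ii L J j1 _ _).mul_const _) ((psi_ii L J j1 _ _).mul_const _),
      intervalIntegral.integral_mul_const, intervalIntegral.integral_mul_const,
      e1φ, e1ψ, e2φ, e2ψ]
  refine ⟨?_, ?_, ?_⟩
  · rintro ⟨ha, hb⟩
    rw [key, if_pos ha, if_pos ha, if_pos hb, if_pos hb]
    field_simp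
    ring
  · intro hmax
    have hA1 : |(i1:ℤ) - j1| ≤ 1 := hmax ▸ le_max_left _ _
    have hA2 : |(i2:ℤ) - j2| ≤ 1 := hmax ▸ le_max_right _ _
    have hB1 := abs_le.mp hA1
    have hB2 := abs_le.mp hA2
    have hor : |(i1:ℤ) - j1| = 1 ∨ |(i2:ℤ) - j2| = 1 := by
      rcases max_choice |(i1:ℤ) - j1| |(i2:ℤ) - j2| with h | h
      · exact Or.inl (h.symm.trans hmax)
      · exact Or.inr (h.symm.trans hmax)
    have c1 : ((i1:ℤ) - j1 = 1 ∨ (i1:ℤ) - j1 = -1) ∨ ((i2:ℤ) - j2 = 1 ∨ (i2:ℤ) - j2 = -1) := by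
      rcases hor with h | h
      · exact Or.inl ((abs_eq (by norm_num)).mp h)
      · exact Or.inr ((abs_eq (by norm_num)).mp h)
    have d1 : i1 = j1 ∨ i1 + 1 = j1 ∨ i1 = j1 + 1 := by omega
    have d2 : i2 = j2 ∨ i2 + 1 = j2 ∨ i2 = j2 + 1 := by omega
    have d3 : ¬(i1 = j1 ∧ i2 = j2) := by omega
    rw [key]
    split_ifs <;> first
      | (exfalso; omega)
      | (field_simp; ring)
  · intro hmax2
    rcases le_max_iff.mp hmax2 with h | h
    · rcases le_abs.mp h with h' | h'
      · have n1 : ¬(i1 = j1) := by omega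
        have n2 : ¬(i1 + 1 = j1 ∨ i1 = j1 + 1) := by omega
        rw [key, if_neg n1, if_neg n2, if_neg n1, if_neg n2]
        ring
      · have n1 : ¬(i1 = j1) := by omega
        have n2 : ¬(i1 + 1 = j1 ∨ i1 = j1 + 1) := by omega
        rw [key, if_neg n1, if_neg n2, if_neg n1, if_neg n2]
        ring
    · rcases le_abs.mp h with h' | h'
      · have n1 : ¬(i2 = j2) := by omega
        have n2 : ¬(i2 + 1 = j2 ∨ i2 = j2 + 1) := by omega
        rw [key, if_neg n1, if_neg n2, if_neg n1, if_neg n2]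
        ring
      · have n1 : ¬(i2 = j2) := by omega
        have n2 : ¬(i2 + 1 = j2 ∨ i2 = j2 + 1) := by omega
        rw [key, if_neg n1, if_neg n2, if_neg n1, if_neg n2]
        ring

end
end

section
/- Let U ⊆ ℝ² be open and let u : U → ℝ be four times continuously differentiable with all partial derivatives up to order four bounded in absolute value by M on U. Then there exists an absolute constant C > 0 such that for every x = (x_1, x_2) and every h > 0 with the closed square [x_1−h, x_1+h] × [x_2−h, x_2+h] contained in U, it holds that |(−Δ_h^9 u)(x) + Δu(x)| ≤ C M h². -/
noncomputable section

/-- The standard basis vectors of `ℝ × ℝ`. -/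
def bv : Fin 2 → ℝ × ℝ := ![(1, 0), (0, 1)]

open Set in
private lemma expand_const {n : ℕ} (f : ContinuousMultilinearMap ℝ (fun _ : Fin n => ℝ × ℝ) ℝ)
    (c : Fin 2 → ℝ) :
    f (fun _ => ∑ j, c j • bv j) = ∑ m : Fin n → Fin 2, (∏ i, c (m i)) * f (fun i => bv (m i)) := by
  have h1 := f.toMultilinearMap.map_sum (fun (_ : Fin n) (j : Fin 2) => c j • bv j)
  simp only [ContinuousMultilinearMap.coe_coe] at h1
  rw [h1]
  refine Finset.sum_congr rfl fun m _ => ?_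
  have h2 := f.toMultilinearMap.map_smul_univ (fun i => c (m i)) (fun i => bv (m i))
  simp only [ContinuousMultilinearMap.coe_coe] at h2
  rw [h2, smul_eq_mul]

open Set in
private lemma neg_const {n : ℕ} (f : ContinuousMultilinearMap ℝ (fun _ : Fin n => ℝ × ℝ) ℝ)
    (w : ℝ × ℝ) :
    f (fun _ => -w) = (-1 : ℝ) ^ n * f (fun _ => w) := by
  have h2 := f.toMultilinearMap.map_smul_univ (fun _ : Fin n => (-1 : ℝ)) (fun _ => w)
  simp only [ContinuousMultilinearMap.coe_coe, neg_smul, one_smul, Finset.prod_const,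
    Finset.card_univ, Fintype.card_fin, smul_eq_mul] at h2
  exact h2

open Set in
private lemma bv_pair (a b : ℝ) : ((a, b) : ℝ × ℝ) = ∑ j, (![a, b] : Fin 2 → ℝ) j • bv j := by
  simp [Fin.sum_univ_two, bv, Prod.ext_iff]

open Set in
private lemma expand2 (f : ContinuousMultilinearMap ℝ (fun _ : Fin 2 => ℝ × ℝ) ℝ) (a b : ℝ) :
    f (fun _ => ((a, b) : ℝ × ℝ)) =
      a * a * f (fun _ => bv 0) + a * b * f ![bv 0, bv 1]
        + b * a * f ![bv 1, bv 0] + b * b * f (fun _ => bv 1) := by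
  rw [bv_pair, expand_const]
  rw [← (piFinTwoEquiv (fun _ : Fin 2 => Fin 2)).symm.sum_comp]
  rw [Fintype.sum_prod_type]
  simp only [Fin.sum_univ_two, piFinTwoEquiv_symm_apply, Fin.prod_univ_two]
  have e00 : (fun i : Fin 2 => bv ((Fin.cons 0 (Fin.cons 0 finZeroElim) : Fin 2 → Fin 2) i)) = fun _ => bv 0 := by
    funext k; fin_cases k <;> rfl
  have e01 : (fun i : Fin 2 => bv ((Fin.cons 0 (Fin.cons 1 finZeroElim) : Fin 2 → Fin 2) i)) = ![bv 0, bv 1] := by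
    funext k; fin_cases k <;> rfl
  have e10 : (fun i : Fin 2 => bv ((Fin.cons 1 (Fin.cons 0 finZeroElim) : Fin 2 → Fin 2) i)) = ![bv 1, bv 0] := by
    funext k; fin_cases k <;> rfl
  have e11 : (fun i : Fin 2 => bv ((Fin.cons 1 (Fin.cons 1 finZeroElim) : Fin 2 → Fin 2) i)) = fun _ => bv 1 := by
    funext k; fin_cases k <;> rfl
  simp only [e00, e01, e10, e11, Fin.cons_zero, Fin.cons_one, Matrix.cons_val_zero,
    Matrix.cons_val_one, Matrix.head_cons]
  ring

open Set in
private lemma bound4 (f : ContinuousMultilinearMap ℝ (fun _ : Fin 4 => ℝ × ℝ) ℝ) {M h a b : ℝ}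
    (hf : ∀ m : Fin 4 → Fin 2, |f fun j => bv (m j)| ≤ M)
    (ha : |a| ≤ h) (hb : |b| ≤ h) :
    |f fun _ => ((a, b) : ℝ × ℝ)| ≤ 16 * M * h ^ 4 := by
  have hh : 0 ≤ h := le_trans (abs_nonneg a) ha
  have hc : ∀ j, |(![a, b] : Fin 2 → ℝ) j| ≤ h := by
    intro j; fin_cases j <;> simpa
  rw [bv_pair, expand_const]
  calc |∑ m : Fin 4 → Fin 2, (∏ i, ![a, b] (m i)) * f fun i => bv (m i)|
      ≤ ∑ m : Fin 4 → Fin 2, |(∏ i, ![a, b] (m i)) * f fun i => bv (m i)| :=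
        Finset.abs_sum_le_sum_abs _ _
    _ ≤ ∑ _m : Fin 4 → Fin 2, h ^ 4 * M := by
        refine Finset.sum_le_sum fun m _ => ?_
        rw [abs_mul]
        have h1 : |∏ i, ![a, b] (m i)| ≤ h ^ 4 := by
          rw [Finset.abs_prod]
          calc ∏ i, |![a, b] (m i)| ≤ ∏ _i : Fin 4, h :=
                Finset.prod_le_prod (fun _ _ => abs_nonneg _) fun i _ => hc (m i)
            _ = h ^ 4 := by simp [Finset.prod_const]
        exact mul_le_mul h1 (hf m) (abs_nonneg _) (pow_nonneg hh 4)
    _ = 16 * M * h ^ 4 := by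
        rw [Finset.sum_const, Finset.card_univ]
        simp only [Fintype.card_fun, Fintype.card_fin, nsmul_eq_mul]
        norm_num; ring

open Set in
private lemma maps_square {x1 x2 h a b : ℝ} (hh : 0 < h) (ha : |a| ≤ h) (hb : |b| ≤ h) :
    Set.MapsTo (fun t : ℝ => ((x1, x2) : ℝ × ℝ) + t • ((a, b) : ℝ × ℝ)) (Icc 0 1)
      (Icc (x1 - h) (x1 + h) ×ˢ Icc (x2 - h) (x2 + h)) := by
  intro t ht
  simp only [Prod.smul_mk, smul_eq_mul, Prod.mk_add_mk, Set.mem_prod, Set.mem_Icc] at *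
  obtain ⟨ht0, ht1⟩ := ht
  obtain ⟨ha1, ha2⟩ := abs_le.mp ha
  obtain ⟨hb1, hb2⟩ := abs_le.mp hb
  refine ⟨⟨?_, ?_⟩, ?_, ?_⟩ <;> nlinarith

open Set in
private lemma hasDeriv_line {U : Set (ℝ × ℝ)} (hU : IsOpen U) {u : ℝ × ℝ → ℝ}
    (hu : ContDiffOn ℝ 4 u U) (x v : ℝ × ℝ)
    (hmap : Set.MapsTo (fun t : ℝ => x + t • v) (Icc 0 1) U)
    (k : ℕ) (hk : k < 4) {t : ℝ} (ht : t ∈ Icc (0:ℝ) 1) :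
    HasDerivWithinAt (fun s : ℝ => iteratedFDerivWithin ℝ k u U (x + s • v) fun _ => v)
      (iteratedFDerivWithin ℝ (k + 1) u U (x + t • v) fun _ => v) (Icc 0 1) t := by
  have hy : x + t • v ∈ U := hmap ht
  have hd : DifferentiableOn ℝ (iteratedFDerivWithin ℝ k u U) U :=
    hu.differentiableOn_iteratedFDerivWithin (by exact_mod_cast hk) hU.uniqueDiffOn
  have h2 : HasFDerivWithinAt (iteratedFDerivWithin ℝ k u U)
      (fderivWithin ℝ (iteratedFDerivWithin ℝ k u U) U (x + t • v)) U (x + t • v) :=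
    (hd _ hy).hasFDerivWithinAt
  have h1 : HasDerivWithinAt (fun s : ℝ => x + s • v) v (Icc 0 1) t := by
    simpa using (((hasDerivAt_id t).smul_const v).const_add x).hasDerivWithinAt
  have h3 := ((ContinuousMultilinearMap.apply ℝ (fun _ : Fin k => ℝ × ℝ) ℝ
      (fun _ => v)).hasFDerivAt.comp_hasFDerivWithinAt _ h2)
  have h4 := h3.comp_hasDerivWithinAt t h1 hmap
  have h5 : iteratedFDerivWithin ℝ (k + 1) u U (x + t • v) (fun _ => v)
      = (fderivWithin ℝ (iteratedFDerivWithin ℝ k u U) U (x + t • v)) v (fun _ => v) := by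
    rw [iteratedFDerivWithin_succ_apply_left]
    rfl
  rw [h5]
  exact h4

open Set in
private lemma line_iter {U : Set (ℝ × ℝ)} (hU : IsOpen U) {u : ℝ × ℝ → ℝ}
    (hu : ContDiffOn ℝ 4 u U) (x v : ℝ × ℝ)
    (hmap : Set.MapsTo (fun t : ℝ => x + t • v) (Icc 0 1) U) :
    ∀ k : ℕ, k ≤ 4 → ∀ t ∈ Icc (0:ℝ) 1,
      iteratedDerivWithin k (fun s => u (x + s • v)) (Icc 0 1) t
        = iteratedFDerivWithin ℝ k u U (x + t • v) fun _ => v := by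
  intro k
  induction k with
  | zero => intro _ t ht; simp
  | succ k ih =>
    intro hk t ht
    have huniq : UniqueDiffOn ℝ (Icc (0:ℝ) 1) := uniqueDiffOn_Icc zero_lt_one
    rw [iteratedDerivWithin_succ]
    have heq : Set.EqOn (iteratedDerivWithin k (fun s => u (x + s • v)) (Icc (0:ℝ) 1))
        (fun s : ℝ => iteratedFDerivWithin ℝ k u U (x + s • v) fun _ => v) (Icc (0:ℝ) 1) :=
      fun s hs => ih (by omega) s hs
    rw [derivWithin_congr heq (heq ht)]
    exact (hasDeriv_line hU hu x v hmap k (by omega) ht).derivWithin (huniq t ht)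

open Set in
private lemma taylor4 {U : Set (ℝ × ℝ)} (hU : IsOpen U) {u : ℝ × ℝ → ℝ} {M : ℝ}
    (hu : ContDiffOn ℝ 4 u U)
    (hb : ∀ y ∈ U, ∀ m : Fin 4 → Fin 2, |iteratedFDerivWithin ℝ 4 u U y fun j => bv (m j)| ≤ M)
    (x : ℝ × ℝ) {a b h : ℝ} (ha : |a| ≤ h) (hbb : |b| ≤ h)
    (hmap : Set.MapsTo (fun t : ℝ => x + t • ((a, b) : ℝ × ℝ)) (Icc 0 1) U) :
    ∃ R : ℝ,
      u (x + (a, b)) = u x + iteratedFDerivWithin ℝ 1 u U x (fun _ => ((a, b) : ℝ × ℝ))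
        + iteratedFDerivWithin ℝ 2 u U x (fun _ => ((a, b) : ℝ × ℝ)) / 2
        + iteratedFDerivWithin ℝ 3 u U x (fun _ => ((a, b) : ℝ × ℝ)) / 6 + R
      ∧ |R| ≤ 2 / 3 * M * h ^ 4 := by
  set v : ℝ × ℝ := (a, b) with hv
  set g : ℝ → ℝ := fun s => u (x + s • v) with hgdef
  have hL : ContDiff ℝ 4 fun s : ℝ => x + s • v :=
    contDiff_const.add (contDiff_id.smul contDiff_const)
  have hg3 : ContDiffOn ℝ (3 : ℕ) g (Icc (0:ℝ) 1) :=
    (hu.of_le (by norm_num)).comp (hL.of_le (by norm_num)).contDiffOn hmap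
  have hf' : DifferentiableOn ℝ (iteratedDerivWithin 3 g (Icc (0:ℝ) 1)) (Ioo (0:ℝ) 1) := by
    intro t ht
    have ht' : t ∈ Icc (0:ℝ) 1 := Ioo_subset_Icc_self ht
    have hd := (hasDeriv_line hU hu x v hmap 3 (by omega) ht').differentiableWithinAt
    exact ((hd.congr (fun s hs => line_iter hU hu x v hmap 3 (by omega) s hs)
      (line_iter hU hu x v hmap 3 (by omega) t ht')).mono Ioo_subset_Icc_self)
  have hT0 := taylor_mean_remainder_lagrange (f := g) (n := 3) (x₀ := 0) (x := 1) zero_ne_one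
    (by rwa [uIcc_of_le zero_le_one]) (by rwa [uIcc_of_le zero_le_one, uIoo_of_le zero_le_one])
  rw [uIcc_of_le zero_le_one, uIoo_of_le zero_le_one] at hT0
  obtain ⟨t', ht', hT⟩ := hT0
  have ht'' : t' ∈ Icc (0:ℝ) 1 := Ioo_subset_Icc_self ht'
  have h0 : (0:ℝ) ∈ Icc (0:ℝ) 1 := by norm_num
  rw [taylor_within_apply] at hT
  have hx0 : x + (0:ℝ) • v = x := by simp
  have e0 := line_iter hU hu x v hmap 0 (by omega) 0 h0
  have e1 := line_iter hU hu x v hmap 1 (by omega) 0 h0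
  have e2 := line_iter hU hu x v hmap 2 (by omega) 0 h0
  have e3 := line_iter hU hu x v hmap 3 (by omega) 0 h0
  have e4 := line_iter hU hu x v hmap 4 (by omega) t' ht''
  rw [hx0] at e0 e1 e2 e3
  have hg1 : g 1 = u (x + v) := by rw [hgdef]; simp
  refine ⟨iteratedFDerivWithin ℝ 4 u U (x + t' • v) (fun _ => v) / 24, ?_, ?_⟩
  · rw [Finset.sum_range_succ, Finset.sum_range_succ, Finset.sum_range_succ,
      Finset.sum_range_one, e0, e1, e2, e3, e4, hg1] at hT
    simp only [iteratedFDerivWithin_zero_apply] at hT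
    norm_num [Nat.factorial] at hT
    linarith
  · rw [abs_div]
    have hbd := bound4 (iteratedFDerivWithin ℝ 4 u U (x + t' • v)) (hb _ (hmap ht'')) ha hbb
    have hh : (0:ℝ) ≤ h := le_trans (abs_nonneg a) ha
    rw [abs_of_nonneg (by norm_num : (0:ℝ) ≤ 24)]
    nlinarith [abs_nonneg (iteratedFDerivWithin ℝ 4 u U (x + t' • v) fun _ => v)]

open Set in
private lemma pair_sum {U : Set (ℝ × ℝ)} (hU : IsOpen U) {u : ℝ × ℝ → ℝ} {M : ℝ}
    (hu : ContDiffOn ℝ 4 u U)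
    (hb : ∀ y ∈ U, ∀ m : Fin 4 → Fin 2, |iteratedFDerivWithin ℝ 4 u U y fun j => bv (m j)| ≤ M)
    (x : ℝ × ℝ) {a b h : ℝ} (ha : |a| ≤ h) (hbb : |b| ≤ h)
    (hmapp : Set.MapsTo (fun t : ℝ => x + t • ((a, b) : ℝ × ℝ)) (Icc 0 1) U)
    (hmapm : Set.MapsTo (fun t : ℝ => x + t • ((-a, -b) : ℝ × ℝ)) (Icc 0 1) U) :
    ∃ R : ℝ,
      u (x + (a, b)) + u (x + (-a, -b)) =
        2 * u x + iteratedFDerivWithin ℝ 2 u U x (fun _ => ((a, b) : ℝ × ℝ)) + R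
      ∧ |R| ≤ 4 / 3 * M * h ^ 4 := by
  obtain ⟨R1, hR1, hR1b⟩ := taylor4 hU hu hb x ha hbb hmapp
  obtain ⟨R2, hR2, hR2b⟩ := taylor4 hU hu hb x (by simpa) (by simpa) hmapm
  have hneg : ((-a, -b) : ℝ × ℝ) = -((a, b) : ℝ × ℝ) := by simp
  rw [hneg] at hR2
  rw [neg_const (iteratedFDerivWithin ℝ 1 u U x), neg_const (iteratedFDerivWithin ℝ 2 u U x),
    neg_const (iteratedFDerivWithin ℝ 3 u U x)] at hR2
  norm_num at hR2
  refine ⟨R1 + R2, ?_, ?_⟩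
  · linarith
  · calc |R1 + R2| ≤ |R1| + |R2| := abs_add_le _ _
      _ ≤ 4 / 3 * M * h ^ 4 := by linarith

/-- Consistency of the 9-point discrete Laplacian: there is an absolute constant
`C > 0` such that for every open `U ⊆ ℝ²` and every `u` that is `C⁴` on `U` with all
partial derivatives up to order four bounded by `M`, and for every point `x` and
`h > 0` with the closed square `[x_1−h,x_1+h]×[x_2−h,x_2+h] ⊆ U`, one has
`|(−Δ_h⁹ u)(x) + Δu(x)| ≤ C M h²`. -/
theorem stmt12 :
    ∃ C : ℝ, 0 < C ∧
      ∀ (U : Set (ℝ × ℝ)), IsOpen U →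
      ∀ (u : ℝ × ℝ → ℝ) (M : ℝ), ContDiffOn ℝ 4 u U →
      (∀ x ∈ U, ∀ n : ℕ, n ≤ 4 → ∀ m : Fin n → Fin 2,
        |iteratedFDerivWithin ℝ n u U x (fun j => bv (m j))| ≤ M) →
      ∀ (x1 x2 h : ℝ), 0 < h →
        Set.Icc (x1 - h) (x1 + h) ×ˢ Set.Icc (x2 - h) (x2 + h) ⊆ U →
        |8 / (3 * h ^ 2) *
            (u (x1, x2) - 1 / 8 *
              (u (x1 + h, x2 + h) + u (x1, x2 + h) + u (x1 - h, x2 + h)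
                + u (x1 + h, x2) + u (x1 - h, x2) + u (x1 + h, x2 - h)
                + u (x1, x2 - h) + u (x1 - h, x2 - h)))
          + (iteratedFDerivWithin ℝ 2 u U (x1, x2) (fun _ => bv 0)
              + iteratedFDerivWithin ℝ 2 u U (x1, x2) (fun _ => bv 1))|
          ≤ C * M * h ^ 2 := by

  refine ⟨2, by norm_num, ?_⟩
  intro U hU u M hu hb x1 x2 h hh hsub
  have hb4 : ∀ y ∈ U, ∀ m : Fin 4 → Fin 2,
      |iteratedFDerivWithin ℝ 4 u U y fun j => bv (m j)| ≤ M :=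
    fun y hy m => hb y hy 4 le_rfl m
  have hX : ((x1, x2) : ℝ × ℝ) ∈ U := by
    refine hsub ?_
    simp only [Set.mem_prod, Set.mem_Icc]
    constructor <;> constructor <;> linarith
  have hM : 0 ≤ M :=
    le_trans (abs_nonneg _) (hb _ hX 0 (by norm_num) (fun i => i.elim0))
  have habs_h : |h| ≤ h := by rw [abs_of_pos hh]
  have habs_nh : |(-h)| ≤ h := by rw [abs_neg, abs_of_pos hh]
  have habs_0 : |(0:ℝ)| ≤ h := by simp [le_of_lt hh]
  have m1p := (maps_square hh habs_h habs_h).mono_right hsub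
  have m1m := (maps_square hh habs_nh habs_nh).mono_right hsub
  have m2p := (maps_square hh habs_h habs_nh).mono_right hsub
  have m2m := (maps_square hh habs_nh habs_h).mono_right hsub
  have m3p := (maps_square hh habs_h habs_0).mono_right hsub
  have m3m := (maps_square hh habs_nh habs_0).mono_right hsub
  have m4p := (maps_square hh habs_0 habs_h).mono_right hsub
  have m4m := (maps_square hh habs_0 habs_nh).mono_right hsub
  obtain ⟨R1, e1, b1⟩ := pair_sum hU hu hb4 ((x1, x2) : ℝ × ℝ) habs_h habs_h m1p m1m
  obtain ⟨R2, e2, b2⟩ := pair_sum hU hu hb4 ((x1, x2) : ℝ × ℝ) habs_h habs_nh m2p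
    (by simpa using m2m)
  obtain ⟨R3, e3, b3⟩ := pair_sum hU hu hb4 ((x1, x2) : ℝ × ℝ) habs_h habs_0 m3p
    (by simpa using m3m)
  obtain ⟨R4, e4, b4⟩ := pair_sum hU hu hb4 ((x1, x2) : ℝ × ℝ) habs_0 habs_h m4p
    (by simpa using m4m)
  rw [expand2] at e1 e2 e3 e4
  simp only [Prod.mk_add_mk, neg_neg, neg_zero, add_zero, ← sub_eq_add_neg] at e1 e2 e3 e4
  set F00 := iteratedFDerivWithin ℝ 2 u U (x1, x2) (fun _ => bv 0) with hF00
  set F11 := iteratedFDerivWithin ℝ 2 u U (x1, x2) (fun _ => bv 1) with hF11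
  have hZ : u (x1, x2) - 1 / 8 *
        (u (x1 + h, x2 + h) + u (x1, x2 + h) + u (x1 - h, x2 + h)
          + u (x1 + h, x2) + u (x1 - h, x2) + u (x1 + h, x2 - h)
          + u (x1, x2 - h) + u (x1 - h, x2 - h)) =
      -((3 * h ^ 2) * (F00 + F11) + (R1 + R2 + R3 + R4)) / 8 := by
    linear_combination (-(1:ℝ)/8) * e1 - 1/8 * e2 - 1/8 * e3 - 1/8 * e4
  have hne : (3 * h ^ 2 : ℝ) ≠ 0 := by positivity
  have key : 8 / (3 * h ^ 2) *
        (u (x1, x2) - 1 / 8 *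
          (u (x1 + h, x2 + h) + u (x1, x2 + h) + u (x1 - h, x2 + h)
            + u (x1 + h, x2) + u (x1 - h, x2) + u (x1 + h, x2 - h)
            + u (x1, x2 - h) + u (x1 - h, x2 - h)))
      + (F00 + F11) = -(R1 + R2 + R3 + R4) / (3 * h ^ 2) := by
    rw [hZ]; field_simp; ring
  rw [key, abs_div, abs_neg, abs_of_pos (by positivity : (0:ℝ) < 3 * h ^ 2),
    div_le_iff₀ (by positivity : (0:ℝ) < 3 * h ^ 2)]
  have hs1 : |R1 + R2 + R3 + R4| ≤ |R1| + |R2| + |R3| + |R4| := by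
    calc |R1 + R2 + R3 + R4| ≤ |R1 + R2 + R3| + |R4| := abs_add_le _ _
      _ ≤ |R1 + R2| + |R3| + |R4| := by have := abs_add_le (R1 + R2) R3; linarith
      _ ≤ |R1| + |R2| + |R3| + |R4| := by have := abs_add_le R1 R2; linarith
  nlinarith [pow_nonneg (le_of_lt hh) 4, pow_nonneg (le_of_lt hh) 2, sq_nonneg h,
    mul_nonneg hM (pow_nonneg (le_of_lt hh) 4)]


end
end
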